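/- arXiv:2506.20797 — 6 statements merged into one kernel-verified Lean document; each statement's English description precedes it below -/
import Mathlib

section
/- A measure μ: 𝔹 → S is supersolid (homogeneous with Aut(μ) acting minimally on 𝔹) and attains the value 0_S at some proper element of 𝔹 if and only if G := μ(𝔹) is a subgroup of the invertible elements of S and μ is G-filling. -/
/-!
Forward: by minimality, `⊤` is a finite join of `μ`-automorphic images of the proper null
element `z`, so a property of elements that holds below each such image and survives disjoint
joins holds everywhere. This shows that every value is a unit and that every value is attained
strictly inside every proper element, which gives filling, closure under addition and negation.

Backward: as values are units, `μ a = μ b` forces `μ aᶜ = μ bᶜ`, and filling lets a piece `q`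
matched with `p` be cut in the same measures as any cut of `p`. A back-and-forth then refines
the matching `{(a, b), (aᶜ, bᶜ)}` of partitions of `⊤` until each element on either side is a
union of pieces; the limit is a `μ`-automorphism sending `a` to `b`.
-/

variable {B : Type*} [BooleanAlgebra B] {S : Type*} [AddCommMonoid S]

/-- An `S`-valued finitely additive measure on the Boolean algebra `B`. -/
def IsBAMeasure (μ : B → S) : Prop :=
  μ ⊥ = 0 ∧ ∀ a b : B, Disjoint a b → μ (a ⊔ b) = μ a + μ b

/-- An element is proper if it differs from `⊥` and `⊤`. -/
def IsProperElem (a : B) : Prop := a ≠ ⊥ ∧ a ≠ ⊤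

/-- `{a, b, c}` is a partition of `B` into three nonzero pairwise disjoint pieces. -/
def IsPartition3 (a b c : B) : Prop :=
  a ≠ ⊥ ∧ b ≠ ⊥ ∧ c ≠ ⊥ ∧ Disjoint a b ∧ Disjoint a c ∧ Disjoint b c ∧ a ⊔ b ⊔ c = ⊤

/-- A Boolean automorphism `φ` preserves the measure `μ`. -/
def PreservesMeas (μ : B → S) (φ : B ≃o B) : Prop := ∀ x : B, μ (φ x) = μ x

/-- `μ` is homogeneous: every partial `μ`-isomorphism on a 4-element subalgebra
(equivalently, determined by proper `a ↦ b` with `μ a = μ b`, `μ aᶜ = μ bᶜ`)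
extends to a `μ`-automorphism. -/
def MeasHomogeneous (μ : B → S) : Prop :=
  ∀ a b : B, IsProperElem a → IsProperElem b → μ a = μ b → μ aᶜ = μ bᶜ →
    ∃ φ : B ≃o B, PreservesMeas μ φ ∧ φ a = b

/-- The 4 elements property (4EP). -/
def MeasHas4EP (μ : B → S) : Prop :=
  ∀ a b c d : B, IsPartition3 a b c → μ a + μ b = μ d → μ c = μ dᶜ →
    ∃ p q : B, IsProperElem p ∧ IsProperElem q ∧ Disjoint p q ∧
      μ p = μ a ∧ μ q = μ b ∧ p ⊔ q = d

/-- The trinary spectrum of a measure. -/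
def TrinarySpectrum (μ : B → S) : Set (S × S × S) :=
  {t | ∃ a b c : B, IsPartition3 a b c ∧ t = (μ a, μ b, μ c)}

/-- The action of `Aut(μ)` on `B` is minimal. -/
def ActsMinimally (μ : B → S) : Prop :=
  ∀ a : B, IsProperElem a → ∃ (n : ℕ) (φ : Fin n → B ≃o B),
    (∀ i, PreservesMeas μ (φ i)) ∧ Finset.univ.sup (fun i => φ i a) = ⊤

/-- `μ` is supersolid: homogeneous and `Aut(μ)` acts minimally. -/
def MeasSupersolid (μ : B → S) : Prop := MeasHomogeneous μ ∧ ActsMinimally μ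

/-- `μ` is `G`-filling. -/
def GFilling (μ : B → S) (G : Set S) : Prop :=
  ∀ g ∈ G, ∀ a : B, IsProperElem a →
    ∃ b : B, b ≠ ⊥ ∧ b ≤ a ∧ b ≠ a ∧ μ b = g

open Finset

section Measure

variable {μ : B → S}

lemma IsBAMeasure.add_sdiff (hμ : IsBAMeasure μ) {a b : B} (h : a ≤ b) :
    μ a + μ (b \ a) = μ b := by
  rw [← hμ.2 _ _ disjoint_sdiff_self_right, sup_sdiff_cancel_right h]

lemma IsBAMeasure.sdiff_congr (hμ : IsBAMeasure μ) {a b c d : B} (hu : IsAddUnit (μ a))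
    (hab : a ≤ b) (hcd : c ≤ d) (hac : μ a = μ c) (hbd : μ b = μ d) :
    μ (b \ a) = μ (d \ c) :=
  hu.add_left_cancel (by rw [hμ.add_sdiff hab, hac, hμ.add_sdiff hcd, hbd])

lemma IsBAMeasure.compl_congr (hμ : IsBAMeasure μ) {a b : B} (hu : IsAddUnit (μ a))
    (h : μ a = μ b) : μ aᶜ = μ bᶜ := by
  simpa only [top_sdiff] using hμ.sdiff_congr hu le_top le_top h rfl

lemma IsBAMeasure.map_finset_sup (hμ : IsBAMeasure μ) {ι : Type*} {s : Finset ι} {f : ι → B}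
    (hs : (s : Set ι).PairwiseDisjoint f) : μ (s.sup f) = ∑ i ∈ s, μ (f i) := by
  classical
  induction s using Finset.induction_on with
  | empty => exact hμ.1
  | insert i s hi ih =>
    rw [coe_insert, Set.pairwiseDisjoint_insert_of_notMem (mem_coe.not.2 hi)] at hs
    rw [sup_insert, sum_insert hi, hμ.2 _ _ (Finset.disjoint_sup_right.2 hs.2), ih hs.1]

end Measure

lemma IsProperElem.compl {a : B} (h : IsProperElem a) : IsProperElem aᶜ :=
  ⟨compl_eq_bot.not.2 h.2, compl_eq_top.not.2 h.1⟩

lemma IsProperElem.map {a : B} (h : IsProperElem a) (φ : B ≃o B) : IsProperElem (φ a) :=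
  ⟨(map_eq_bot_iff φ).not.2 h.1, (map_eq_top_iff φ).not.2 h.2⟩

lemma PreservesMeas.map_symm {V : Type*} {μ : B → V} {φ : B ≃o B} (h : PreservesMeas μ φ)
    (x : B) : μ (φ.symm x) = μ x := by
  rw [← h, OrderIso.apply_symm_apply]

theorem ActsMinimally.induction {V : Type*} {μ : B → V} (hmin : ActsMinimally μ) {z : B}
    (hz : IsProperElem z) {P : B → Prop}
    (hbase : ∀ φ : B ≃o B, PreservesMeas μ φ → ∀ x ≤ φ z, P x)
    (hsup : ∀ x y, Disjoint x y → P x → P y → P (x ⊔ y)) (x : B) : P x := by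
  classical
  obtain ⟨n, φ, hφ, hcover⟩ := hmin z hz
  suffices ∀ s : Finset (Fin n), ∀ x ≤ s.sup (fun i => φ i z), P x from
    this univ x (hcover ▸ le_top)
  intro s
  induction s using Finset.induction_on with
  | empty => exact fun x hx => hbase (OrderIso.refl B) (fun _ => rfl) x (hx.trans bot_le)
  | insert i s _ ih =>
    intro x hx
    rw [sup_insert] at hx
    rw [← sup_inf_sdiff x (φ i z)]
    exact hsup _ _ disjoint_inf_sdiff (hbase (φ i) (hφ i) _ inf_le_right)
      (ih _ (sdiff_le_iff.2 hx))

section Forward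

variable {μ : B → S} {z : B}

theorem isAddUnit_of_null (hμ : IsBAMeasure μ) (hmin : ActsMinimally μ) (hz : IsProperElem z)
    (hz0 : μ z = 0) (x : B) : IsAddUnit (μ x) :=
  hmin.induction hz (P := fun x => IsAddUnit (μ x))
    (fun φ hφ x hx => .of_add_eq_zero _ (by rw [hμ.add_sdiff hx, hφ, hz0]))
    (fun x y hxy hx hy => by rw [hμ.2 x y hxy]; exact hx.add hy) x

/-- Homogeneity moves `k ⊔ s` onto `s`, and with it the null element `k` inside `s`. -/
lemma exists_null_le_of_disjoint (hμ : IsBAMeasure μ) (hhom : MeasHomogeneous μ)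
    {k s : B} (hk : IsProperElem k) (hk0 : μ k = 0) (hs : IsProperElem s)
    (hu : IsAddUnit (μ s)) (hks : Disjoint k s) (hkst : k ⊔ s ≠ ⊤) :
    ∃ v, v ≠ ⊥ ∧ v ≤ s ∧ μ v = 0 := by
  have hmeas : μ (k ⊔ s) = μ s := by rw [hμ.2 _ _ hks, hk0, zero_add]
  obtain ⟨χ, hχ, hχks⟩ := hhom (k ⊔ s) s ⟨ne_bot_of_le_ne_bot hk.1 le_sup_left, hkst⟩ hs hmeas
    (hμ.compl_congr (hmeas ▸ hu) hmeas)
  exact ⟨χ k, (hk.map χ).1, hχks ▸ χ.monotone le_sup_left, by rw [hχ, hk0]⟩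

theorem exists_null_le (hμ : IsBAMeasure μ) (hatomless : ∀ a : B, a ≠ ⊥ → ∃ b, b ≠ ⊥ ∧ b < a)
    (hs : MeasSupersolid μ) (hz : IsProperElem z) (hz0 : μ z = 0) {a : B} (ha : a ≠ ⊥) :
    ∃ v, v ≠ ⊥ ∧ v ≤ a ∧ μ v = 0 := by
  by_cases haT : a = ⊤
  · exact ⟨z, hz.1, haT ▸ le_top, hz0⟩
  obtain ⟨n, ψ, hψ, hcover⟩ := hs.2 a ⟨ha, haT⟩
  obtain ⟨i, -, hi⟩ : ∃ i ∈ univ, zᶜ ⊓ ψ i a ≠ ⊥ := by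
    by_contra! h
    apply hz.compl.1
    rw [← inf_top_eq zᶜ, ← hcover, sup_inf_distrib_left, Finset.sup_eq_bot_iff]
    exact h
  obtain ⟨s, hs0, hst⟩ := hatomless _ hi
  have hsz : Disjoint z s := le_compl_iff_disjoint_left.1 (hst.le.trans inf_le_left)
  have hzs : z ⊔ s ≠ ⊤ := fun h => hst.not_ge <|
    Disjoint.left_le_of_le_sup_left (h ▸ le_top) (le_compl_iff_disjoint_right.1 inf_le_left)
  obtain ⟨v, hv0, hvs, hv⟩ := exists_null_le_of_disjoint hμ hs.1 hz hz0
    ⟨hs0, ne_top_of_le_ne_top hzs le_sup_right⟩ (isAddUnit_of_null hμ hs.2 hz hz0 s) hsz hzs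
  refine ⟨(ψ i).symm v, (map_eq_bot_iff _).not.2 hv0, ?_, by rw [(hψ i).map_symm, hv]⟩
  exact (ψ i).symm_apply_le.2 (hvs.trans (hst.le.trans inf_le_right))

theorem exists_null_lt (hμ : IsBAMeasure μ) (hatomless : ∀ a : B, a ≠ ⊥ → ∃ b, b ≠ ⊥ ∧ b < a)
    (hs : MeasSupersolid μ) (hz : IsProperElem z) (hz0 : μ z = 0) {a : B} (ha : IsProperElem a) :
    ∃ v, v ≠ ⊥ ∧ v < a ∧ μ v = 0 := by
  obtain ⟨a₀, ha₀, ha₀a⟩ := hatomless a ha.1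
  obtain ⟨v, hv0, hva₀, hv⟩ := exists_null_le hμ hatomless hs hz hz0 ha₀
  exact ⟨v, hv0, hva₀.trans_lt ha₀a, hv⟩

/-- The null pieces `x ≤ φ z` are moved by homogeneity into a null element below `r`. -/
theorem exists_lt_meas_eq (hμ : IsBAMeasure μ)
    (hatomless : ∀ a : B, a ≠ ⊥ → ∃ b, b ≠ ⊥ ∧ b < a) (hs : MeasSupersolid μ)
    (hz : IsProperElem z) (hz0 : μ z = 0) (x : B) {r : B} (hr : IsProperElem r) :
    ∃ b < r, μ b = μ x := by
  have hU := isAddUnit_of_null hμ hs.2 hz hz0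
  refine hs.2.induction hz (P := fun x => ∀ r, IsProperElem r → ∃ b < r, μ b = μ x) ?_ ?_ x r hr
  · intro φ hφ x hx r hr
    obtain ⟨v, hv0, hvr, hv⟩ := exists_null_lt hμ hatomless hs hz hz0 hr
    have hφz : μ (φ z) = μ v := by rw [hφ, hz0, hv]
    obtain ⟨χ, hχ, hχv⟩ := hs.1 (φ z) v (hz.map φ) ⟨hv0, ne_top_of_lt (hvr.trans_le le_top)⟩
      hφz (hμ.compl_congr (hU _) hφz)
    exact ⟨χ x, ((χ.monotone hx).trans_eq hχv).trans_lt hvr, hχ x⟩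
  · intro x y hxy hx hy r hr
    obtain ⟨b₁, hb₁r, hb₁⟩ := hx r hr
    obtain ⟨b₂, hb₂r, hb₂⟩ := hy (r \ b₁)
      ⟨sdiff_eq_bot_iff.not.2 hb₁r.not_ge, ne_top_of_le_ne_top hr.2 sdiff_le⟩
    refine ⟨b₁ ⊔ b₂, lt_of_le_of_ne (sup_le hb₁r.le (hb₂r.le.trans sdiff_le)) fun h => ?_, ?_⟩
    · exact hb₂r.not_ge (sdiff_le_iff.2 h.ge)
    · rw [hμ.2 _ _ (disjoint_sdiff_self_right.mono_right hb₂r.le), hμ.2 _ _ hxy, hb₁, hb₂]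

theorem gFilling_range (hμ : IsBAMeasure μ) (hatomless : ∀ a : B, a ≠ ⊥ → ∃ b, b ≠ ⊥ ∧ b < a)
    (hs : MeasSupersolid μ) (hz : IsProperElem z) (hz0 : μ z = 0) :
    GFilling μ (Set.range μ) := by
  rintro _ ⟨c, rfl⟩ a ha
  obtain ⟨b, hba, hb⟩ := exists_lt_meas_eq hμ hatomless hs hz hz0 c ha
  by_cases hb0 : b = ⊥
  · obtain ⟨v, hv0, hva, hv⟩ := exists_null_lt hμ hatomless hs hz hz0 ha
    exact ⟨v, hv0, hva.le, hva.ne, by rw [hv, ← hb, hb0, hμ.1]⟩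
  · exact ⟨b, hb0, hba.le, hba.ne, hb⟩

lemma exists_proper_meas_eq (hμ : IsBAMeasure μ) (hz : IsProperElem z) (hz0 : μ z = 0)
    (x : B) : ∃ y, IsProperElem y ∧ μ y = μ x := by
  by_cases hx0 : x = ⊥
  · exact ⟨z, hz, by rw [hz0, hx0, hμ.1]⟩
  by_cases hxT : x = ⊤
  · exact ⟨zᶜ, hz.compl, by rw [hxT, ← top_sdiff, ← hμ.add_sdiff le_top, hz0, zero_add]⟩
  exact ⟨x, ⟨hx0, hxT⟩, rfl⟩

theorem add_mem_range (hμ : IsBAMeasure μ) (hatomless : ∀ a : B, a ≠ ⊥ → ∃ b, b ≠ ⊥ ∧ b < a)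
    (hs : MeasSupersolid μ) (hz : IsProperElem z) (hz0 : μ z = 0) (x y : B) :
    μ x + μ y ∈ Set.range μ := by
  obtain ⟨x', hx', hxx'⟩ := exists_proper_meas_eq hμ hz hz0 x
  obtain ⟨b, hb, hby⟩ := exists_lt_meas_eq hμ hatomless hs hz hz0 y hx'.compl
  exact ⟨x' ⊔ b, by rw [hμ.2 _ _ (le_compl_iff_disjoint_left.1 hb.le), hby, hxx']⟩

theorem exists_add_eq_zero (hμ : IsBAMeasure μ)
    (hatomless : ∀ a : B, a ≠ ⊥ → ∃ b, b ≠ ⊥ ∧ b < a) (hs : MeasSupersolid μ)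
    (hz : IsProperElem z) (hz0 : μ z = 0) (x : B) : ∃ y, μ x + μ y = 0 := by
  refine hs.2.induction hz (P := fun x => ∃ y, μ x + μ y = 0) ?_ ?_ x
  · exact fun φ hφ x hx => ⟨φ z \ x, by rw [hμ.add_sdiff hx, hφ, hz0]⟩
  · rintro x y hxy ⟨x', hx'⟩ ⟨y', hy'⟩
    obtain ⟨w, hw⟩ := add_mem_range hμ hatomless hs hz hz0 x' y'
    exact ⟨w, by rw [hμ.2 _ _ hxy, hw, add_add_add_comm, hx', hy', add_zero]⟩

end Forward

theorem exists_orderIso_of_rel {α β : Type*} [PartialOrder α] [PartialOrder β]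
    (R : α → β → Prop)
    (hdom : ∀ x, ∃ y, R x y) (hcod : ∀ y, ∃ x, R x y)
    (hle : ∀ ⦃x y x' y'⦄, R x y → R x' y' → (x ≤ x' ↔ y ≤ y')) :
    ∃ φ : α ≃o β, ∀ x y, R x y → φ x = y := by
  choose f hf using hdom
  choose g hg using hcod
  have hfun : ∀ ⦃x y⦄, R x y → f x = y := fun x y h =>
    le_antisymm ((hle (hf x) h).1 le_rfl) ((hle h (hf x)).1 le_rfl)
  have hinj : ∀ ⦃x x' y⦄, R x y → R x' y → x = x' := fun x x' y h h' =>
    le_antisymm ((hle h h').2 le_rfl) ((hle h' h).2 le_rfl)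
  exact ⟨⟨⟨f, g, fun x => hinj (hg _) (hf x), fun y => hfun (hg y)⟩,
    fun {x x'} => (hle (hf x) (hf x')).symm⟩, hfun⟩

lemma exists_subset_sup_eq {ι : Type*} {M : Finset ι} {f : ι → B} (hM : M.sup f = ⊤) {x : B}
    (hx : ∀ i ∈ M, f i ≤ x ∨ Disjoint (f i) x) : ∃ T ⊆ M, T.sup f = x := by
  classical
  refine ⟨M.filter (f · ≤ x), filter_subset _ _, le_antisymm
    (Finset.sup_le fun i hi => (mem_filter.1 hi).2) ?_⟩
  calc x = M.sup fun i => x ⊓ f i := by rw [← sup_inf_distrib_left, hM, inf_top_eq]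
    _ ≤ _ := Finset.sup_le fun i hi => (hx i hi).elim
      (fun h => inf_le_right.trans (le_sup (mem_filter.2 ⟨hi, h⟩)))
      (fun h => h.symm.eq_bot.trans_le bot_le)

structure IsProperPartition {ι : Type*} (M : Finset ι) (f : ι → B) (a : B) : Prop where
  proper : ∀ i ∈ M, IsProperElem (f i)
  pairwiseDisjoint : (M : Set ι).PairwiseDisjoint f
  sup_eq : M.sup f = a

namespace IsProperPartition

variable {ι : Type*} {M T T' : Finset ι} {f : ι → B} {a : B}

lemma sup_le_sup_iff (hM : IsProperPartition M f a) (hT : T ⊆ M) (hT' : T' ⊆ M) :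
    T.sup f ≤ T'.sup f ↔ T ⊆ T' := by
  refine ⟨fun h i hi => ?_, Finset.sup_mono⟩
  have hmeet : ¬Disjoint (f i) (T'.sup f) := fun hd =>
    (hM.proper i (hT hi)).1 (hd.eq_bot_of_le ((le_sup hi).trans h))
  obtain ⟨j, hj, hij⟩ : ∃ j ∈ T', ¬Disjoint (f i) (f j) := by
    simpa only [Finset.disjoint_sup_right, not_forall, exists_prop] using hmeet
  exact hM.pairwiseDisjoint.elim (hT hi) (hT' hj) hij ▸ hj

lemma biUnion [DecidableEq ι] {K : ι → Finset ι} (hM : IsProperPartition M f a)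
    (hK : ∀ i ∈ M, IsProperPartition (K i) f (f i)) : IsProperPartition (M.biUnion K) f a where
  proper j hj := by
    obtain ⟨i, hi, hj⟩ := mem_biUnion.1 hj
    exact (hK i hi).proper j hj
  pairwiseDisjoint := by
    rw [coe_biUnion]
    refine Set.PairwiseDisjoint.biUnion_finset (fun i hi i' hi' hne => ?_)
      fun i hi => (hK i hi).pairwiseDisjoint
    simpa only [Function.onFun, (hK i hi).sup_eq, (hK i' hi').sup_eq]
      using hM.pairwiseDisjoint hi hi' hne
  sup_eq := by
    rw [sup_biUnion, ← hM.sup_eq]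
    exact sup_congr rfl fun i hi => (hK i hi).sup_eq

end IsProperPartition

structure IsMatching (μ : B → S) (M : Finset (B × B)) (a b : B) : Prop where
  fst : IsProperPartition M Prod.fst a
  snd : IsProperPartition M Prod.snd b
  meas_eq : ∀ c ∈ M, μ c.1 = μ c.2

def MatchedBy (M : Finset (B × B)) (x y : B) : Prop :=
  ∃ T ⊆ M, T.sup Prod.fst = x ∧ T.sup Prod.snd = y

section Matching

variable {V : Type*} {μ : B → V} {M : Finset (B × B)} {a b x y : B}

lemma isMatching_pair [DecidableEq B] {p₁ q₁ p₂ q₂ : B} (hp₁ : IsProperElem p₁)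
    (hq₁ : IsProperElem q₁) (hp₂ : IsProperElem p₂) (hq₂ : IsProperElem q₂)
    (hp : Disjoint p₁ p₂) (hq : Disjoint q₁ q₂) (h₁ : μ p₁ = μ q₁) (h₂ : μ p₂ = μ q₂) :
    IsMatching μ {(p₁, q₁), (p₂, q₂)} (p₁ ⊔ p₂) (q₁ ⊔ q₂) := by
  refine ⟨⟨?_, ?_, by simp⟩, ⟨?_, ?_, by simp⟩, ?_⟩
  all_goals first
    | simp only [mem_insert, mem_singleton, forall_eq_or_imp, forall_eq]; exact ⟨‹_›, ‹_›⟩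
    | rw [coe_pair, Set.PairwiseDisjoint, Set.pairwise_pair_of_symm]; exact fun _ => ‹_›

lemma isMatching_singleton {p q : B} (hp : IsProperElem p) (hq : IsProperElem q)
    (h : μ p = μ q) : IsMatching μ {(p, q)} p q := by
  refine ⟨⟨?_, ?_, by simp⟩, ⟨?_, ?_, by simp⟩, ?_⟩ <;> simp [hp, hq, h]

lemma IsMatching.biUnion [DecidableEq B] {K : B × B → Finset (B × B)} (hM : IsMatching μ M a b)
    (hK : ∀ c ∈ M, IsMatching μ (K c) c.1 c.2) : IsMatching μ (M.biUnion K) a b where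
  fst := hM.fst.biUnion fun c hc => (hK c hc).fst
  snd := hM.snd.biUnion fun c hc => (hK c hc).snd
  meas_eq d hd := by
    obtain ⟨c, hc, hd⟩ := mem_biUnion.1 hd
    exact (hK c hc).meas_eq d hd

lemma MatchedBy.biUnion [DecidableEq B] {K : B × B → Finset (B × B)} (h : MatchedBy M x y)
    (hK : ∀ c ∈ M, IsMatching μ (K c) c.1 c.2) : MatchedBy (M.biUnion K) x y := by
  obtain ⟨T, hT, rfl, rfl⟩ := h
  refine ⟨T.biUnion K, biUnion_subset_biUnion_of_subset_left _ hT, ?_, ?_⟩ <;> rw [sup_biUnion]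
  · exact sup_congr rfl fun c hc => (hK c (hT hc)).fst.sup_eq
  · exact sup_congr rfl fun c hc => (hK c (hT hc)).snd.sup_eq

lemma MatchedBy.le_iff (hM : IsMatching μ M a b) {x' y' : B} (h : MatchedBy M x y)
    (h' : MatchedBy M x' y') : x ≤ x' ↔ y ≤ y' := by
  obtain ⟨T, hT, rfl, rfl⟩ := h
  obtain ⟨T', hT', rfl, rfl⟩ := h'
  rw [hM.fst.sup_le_sup_iff hT hT', hM.snd.sup_le_sup_iff hT hT']

lemma IsMatching.exists_matchedBy_fst (hM : IsMatching μ M ⊤ b)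
    (hx : ∀ c ∈ M, c.1 ≤ x ∨ Disjoint c.1 x) : ∃ y, MatchedBy M x y := by
  obtain ⟨T, hT, hTx⟩ := exists_subset_sup_eq hM.fst.sup_eq hx
  exact ⟨_, T, hT, hTx, rfl⟩

lemma IsMatching.exists_matchedBy_snd (hM : IsMatching μ M a ⊤)
    (hy : ∀ c ∈ M, c.2 ≤ y ∨ Disjoint c.2 y) : ∃ x, MatchedBy M x y := by
  obtain ⟨T, hT, hTy⟩ := exists_subset_sup_eq hM.snd.sup_eq hy
  exact ⟨_, T, hT, rfl, hTy⟩

lemma IsMatching.exists_refine (hM : IsMatching μ M a b) (P : B × B → Prop)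
    (hsplit : ∀ c ∈ M, ∃ K, IsMatching μ K c.1 c.2 ∧ ∀ d ∈ K, P d) :
    ∃ M', IsMatching μ M' a b ∧ MatchedBy M ≤ MatchedBy M' ∧ ∀ d ∈ M', P d := by
  classical
  choose! K hK hKP using hsplit
  refine ⟨M.biUnion K, hM.biUnion hK, fun x y h => h.biUnion hK, fun d hd => ?_⟩
  obtain ⟨c, hc, hd⟩ := mem_biUnion.1 hd
  exact hKP c hc d hd

end Matching

lemma MatchedBy.meas_eq {μ : B → S} {M : Finset (B × B)} {a b x y : B} (hμ : IsBAMeasure μ)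
    (hM : IsMatching μ M a b) (h : MatchedBy M x y) : μ x = μ y := by
  obtain ⟨T, hT, rfl, rfl⟩ := h
  rw [hμ.map_finset_sup (hM.fst.pairwiseDisjoint.subset (coe_subset.2 hT)),
    hμ.map_finset_sup (hM.snd.pairwiseDisjoint.subset (coe_subset.2 hT))]
  exact sum_congr rfl fun c hc => hM.meas_eq c (hT hc)

section Backward

variable {μ : B → S}

lemma exists_cut (hμ : IsBAMeasure μ) (hU : ∀ a : B, IsAddUnit (μ a))
    (hfill : GFilling μ (Set.range μ)) {p q : B} (hq : IsProperElem q) (hpq : μ p = μ q)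
    (x : B) : ∃ s, s ≠ ⊥ ∧ s < q ∧ μ s = μ (p ⊓ x) ∧ μ (q \ s) = μ (p \ x) := by
  obtain ⟨s, hs0, hsq, hsq', hs⟩ := hfill _ ⟨p ⊓ x, rfl⟩ q hq
  refine ⟨s, hs0, lt_of_le_of_ne hsq hsq', hs, ?_⟩
  rw [← sdiff_inf_self_left p x]
  exact hμ.sdiff_congr (hU s) hsq inf_le_left hs hpq.symm

lemma exists_matching_cut_fst (hμ : IsBAMeasure μ) (hU : ∀ a : B, IsAddUnit (μ a))
    (hfill : GFilling μ (Set.range μ)) {p q : B} (hp : IsProperElem p) (hq : IsProperElem q)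
    (hpq : μ p = μ q) (x : B) :
    ∃ K, IsMatching μ K p q ∧ ∀ d ∈ K, d.1 ≤ x ∨ Disjoint d.1 x := by
  classical
  by_cases htriv : p ≤ x ∨ Disjoint p x
  · exact ⟨{(p, q)}, isMatching_singleton hp hq hpq, by simpa using htriv⟩
  rw [not_or] at htriv
  obtain ⟨s, hs0, hsq, hs, hrest⟩ := exists_cut hμ hU hfill hq hpq x
  have hK := isMatching_pair (μ := μ) (p₁ := p ⊓ x) (q₁ := s) (p₂ := p \ x) (q₂ := q \ s)
    ⟨disjoint_iff.not.1 htriv.2, ne_top_of_le_ne_top hp.2 inf_le_left⟩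
    ⟨hs0, ne_top_of_lt (hsq.trans_le le_top)⟩
    ⟨sdiff_eq_bot_iff.not.2 htriv.1, ne_top_of_le_ne_top hp.2 sdiff_le⟩
    ⟨sdiff_eq_bot_iff.not.2 hsq.not_ge, ne_top_of_le_ne_top hq.2 sdiff_le⟩
    disjoint_inf_sdiff disjoint_sdiff_self_right hs.symm hrest.symm
  rw [sup_inf_sdiff, sup_sdiff_cancel_right hsq.le] at hK
  refine ⟨_, hK, ?_⟩
  simp only [mem_insert, mem_singleton, forall_eq_or_imp, forall_eq]
  exact ⟨.inl inf_le_right, .inr disjoint_sdiff_self_left⟩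

lemma exists_matching_cut_snd (hμ : IsBAMeasure μ) (hU : ∀ a : B, IsAddUnit (μ a))
    (hfill : GFilling μ (Set.range μ)) {p q : B} (hp : IsProperElem p) (hq : IsProperElem q)
    (hpq : μ p = μ q) (y : B) :
    ∃ K, IsMatching μ K p q ∧ ∀ d ∈ K, d.2 ≤ y ∨ Disjoint d.2 y := by
  classical
  by_cases htriv : q ≤ y ∨ Disjoint q y
  · exact ⟨{(p, q)}, isMatching_singleton hp hq hpq, by simpa using htriv⟩
  rw [not_or] at htriv
  obtain ⟨s, hs0, hsp, hs, hrest⟩ := exists_cut hμ hU hfill hp hpq.symm y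
  have hK := isMatching_pair (μ := μ) (p₁ := s) (q₁ := q ⊓ y) (p₂ := p \ s) (q₂ := q \ y)
    ⟨hs0, ne_top_of_lt (hsp.trans_le le_top)⟩
    ⟨disjoint_iff.not.1 htriv.2, ne_top_of_le_ne_top hq.2 inf_le_left⟩
    ⟨sdiff_eq_bot_iff.not.2 hsp.not_ge, ne_top_of_le_ne_top hp.2 sdiff_le⟩
    ⟨sdiff_eq_bot_iff.not.2 htriv.1, ne_top_of_le_ne_top hq.2 sdiff_le⟩
    disjoint_sdiff_self_right disjoint_inf_sdiff hs hrest
  rw [sup_inf_sdiff, sup_sdiff_cancel_right hsp.le] at hK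
  refine ⟨_, hK, ?_⟩
  simp only [mem_insert, mem_singleton, forall_eq_or_imp, forall_eq]
  exact ⟨.inl inf_le_right, .inr disjoint_sdiff_self_left⟩

lemma IsMatching.exists_refine_matchedBy (hμ : IsBAMeasure μ) (hU : ∀ a : B, IsAddUnit (μ a))
    (hfill : GFilling μ (Set.range μ)) {M : Finset (B × B)} (hM : IsMatching μ M ⊤ ⊤) (e : B) :
    ∃ M', IsMatching μ M' ⊤ ⊤ ∧ MatchedBy M ≤ MatchedBy M' ∧
      (∃ y, MatchedBy M' e y) ∧ ∃ x, MatchedBy M' x e := by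
  obtain ⟨M₁, hM₁, hMM₁, he₁⟩ := hM.exists_refine _ fun c hc => exists_matching_cut_fst hμ hU
    hfill (hM.fst.proper c hc) (hM.snd.proper c hc) (hM.meas_eq c hc) e
  obtain ⟨M₂, hM₂, hM₁M₂, he₂⟩ := hM₁.exists_refine _ fun c hc => exists_matching_cut_snd hμ hU
    hfill (hM₁.fst.proper c hc) (hM₁.snd.proper c hc) (hM₁.meas_eq c hc) e
  obtain ⟨y, hy⟩ := hM₁.exists_matchedBy_fst he₁
  exact ⟨M₂, hM₂, hMM₁.trans hM₁M₂, ⟨y, hM₁M₂ _ _ hy⟩, hM₂.exists_matchedBy_snd he₂⟩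

/-- The back-and-forth, along an enumeration of the countable algebra `B`. -/
lemma exists_matching_chain [Countable B] (hμ : IsBAMeasure μ) (hU : ∀ a : B, IsAddUnit (μ a))
    (hfill : GFilling μ (Set.range μ)) {M₀ : Finset (B × B)} (hM₀ : IsMatching μ M₀ ⊤ ⊤) :
    ∃ L : ℕ → Finset (B × B), L 0 = M₀ ∧ (∀ n, IsMatching μ (L n) ⊤ ⊤) ∧
      Monotone (fun n => MatchedBy (L n)) ∧ (∀ x, ∃ y, ∃ n, MatchedBy (L n) x y) ∧
      ∀ y, ∃ x, ∃ n, MatchedBy (L n) x y := by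
  obtain ⟨e, he⟩ := exists_surjective_nat B
  choose! next hnext using fun M (hM : IsMatching μ M ⊤ ⊤) n =>
    hM.exists_refine_matchedBy hμ hU hfill (e n)
  let L : ℕ → Finset (B × B) := fun n => Nat.rec M₀ (fun k M => next M k) n
  have hL : ∀ n, IsMatching μ (L n) ⊤ ⊤ := by
    intro n
    induction n with
    | zero => exact hM₀
    | succ n ih => exact (hnext _ ih n).1
  refine ⟨L, rfl, hL, monotone_nat_of_le_succ fun n => (hnext _ (hL n) n).2.1, fun x => ?_,
    fun y => ?_⟩
  · obtain ⟨n, rfl⟩ := he x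
    obtain ⟨y, hy⟩ := (hnext _ (hL n) n).2.2.1
    exact ⟨y, n + 1, hy⟩
  · obtain ⟨n, rfl⟩ := he y
    obtain ⟨x, hx⟩ := (hnext _ (hL n) n).2.2.2
    exact ⟨x, n + 1, hx⟩

theorem measHomogeneous_of_gFilling [Countable B] (hμ : IsBAMeasure μ)
    (hU : ∀ a : B, IsAddUnit (μ a)) (hfill : GFilling μ (Set.range μ)) :
    MeasHomogeneous μ := by
  classical
  intro a b ha hb hab hac
  have hM₀ : IsMatching μ {(a, b), (aᶜ, bᶜ)} ⊤ ⊤ := by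
    simpa only [sup_compl_eq_top] using isMatching_pair ha hb ha.compl hb.compl
      disjoint_compl_right disjoint_compl_right hab hac
  obtain ⟨L, hL0, hL, hmono, hdom, hcod⟩ := exists_matching_chain hμ hU hfill hM₀
  obtain ⟨φ, hφ⟩ := exists_orderIso_of_rel (fun x y => ∃ n, MatchedBy (L n) x y) hdom hcod
    fun x y x' y' ⟨n, h⟩ ⟨n', h'⟩ => MatchedBy.le_iff (hL (max n n'))
      (hmono (le_max_left n n') x y h) (hmono (le_max_right n n') x' y' h')
  refine ⟨φ, fun x => ?_, hφ a b ⟨0, {(a, b)}, by simp [hL0], by simp, by simp⟩⟩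
  obtain ⟨y, n, h⟩ := hdom x
  rw [hφ x y ⟨n, h⟩]
  exact (h.meas_eq hμ (hL n)).symm

/-- An automorphism moving `a` onto the complement of a copy of `aᶜ` inside `a` covers `⊤`
together with `a`. -/
theorem actsMinimally_of_gFilling (hμ : IsBAMeasure μ) (hhom : MeasHomogeneous μ)
    (hU : ∀ a : B, IsAddUnit (μ a)) (hfill : GFilling μ (Set.range μ)) : ActsMinimally μ := by
  intro a ha
  obtain ⟨c, hc0, hca, -, hc⟩ := hfill _ ⟨aᶜ, rfl⟩ a ha
  have hcμ : μ cᶜ = μ a := by simpa only [compl_compl] using hμ.compl_congr (hU c) hc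
  obtain ⟨ψ, hψ, hψa⟩ := hhom a cᶜ ha (IsProperElem.compl ⟨hc0, ne_top_of_le_ne_top ha.2 hca⟩)
    hcμ.symm (by rw [compl_compl, hc])
  refine ⟨2, ![OrderIso.refl B, ψ], Fin.forall_fin_two.2 ⟨fun _ => rfl, hψ⟩, ?_⟩
  have hsup : univ.sup (fun i => ![OrderIso.refl B, ψ] i a) = a ⊔ ψ a := by
    simp [Fin.univ_succ]
  rw [hsup, hψa]
  exact top_unique (sup_compl_eq_top (x := c) ▸ sup_le_sup_right hca _)

theorem exists_null_of_gFilling [Nontrivial B] (hμ : IsBAMeasure μ)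
    (hatomless : ∀ a : B, a ≠ ⊥ → ∃ b, b ≠ ⊥ ∧ b < a) (hfill : GFilling μ (Set.range μ)) :
    ∃ z, IsProperElem z ∧ μ z = 0 := by
  obtain ⟨b, hb0, hb⟩ := hatomless ⊤ top_ne_bot
  obtain ⟨z, hz0, hzb, -, hz⟩ := hfill 0 ⟨⊥, hμ.1⟩ b ⟨hb0, hb.ne⟩
  exact ⟨z, ⟨hz0, ne_top_of_le_ne_top hb.ne hzb⟩, hz⟩

end Backward

/-- `μ` is supersolid and attains `0` at a proper element iff
`G = μ(B)` is a subgroup of the invertible elements of `S` and `μ` is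
`G`-filling. -/
theorem supersolid_zero_iff_filling [Countable B] [Nontrivial B]
    (hatomless : ∀ a : B, a ≠ ⊥ → ∃ b : B, b ≠ ⊥ ∧ b < a)
    (μ : B → S) (hμ : IsBAMeasure μ) :
    (MeasSupersolid μ ∧ ∃ z : B, IsProperElem z ∧ μ z = 0) ↔
    ((∀ x ∈ Set.range μ, IsAddUnit x) ∧
     (∀ x ∈ Set.range μ, ∀ y ∈ Set.range μ, x + y ∈ Set.range μ) ∧
     (∀ x ∈ Set.range μ, ∃ y ∈ Set.range μ, x + y = 0) ∧
     GFilling μ (Set.range μ)) := by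
  constructor
  · rintro ⟨hs, z, hz, hz0⟩
    refine ⟨?_, ?_, ?_, gFilling_range hμ hatomless hs hz hz0⟩
    · rintro _ ⟨x, rfl⟩
      exact isAddUnit_of_null hμ hs.2 hz hz0 x
    · rintro _ ⟨x, rfl⟩ _ ⟨y, rfl⟩
      exact add_mem_range hμ hatomless hs hz hz0 x y
    · rintro _ ⟨x, rfl⟩
      obtain ⟨y, hy⟩ := exists_add_eq_zero hμ hatomless hs hz hz0 x
      exact ⟨μ y, ⟨y, rfl⟩, hy⟩
  · rintro ⟨hU, -, -, hfill⟩
    have hU' : ∀ a, IsAddUnit (μ a) := fun a => hU _ ⟨a, rfl⟩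
    have hhom := measHomogeneous_of_gFilling hμ hU' hfill
    exact ⟨⟨hhom, actsMinimally_of_gFilling hμ hhom hU' hfill⟩,
      exists_null_of_gFilling hμ hatomless hfill⟩
end

section
/- Let G be a group, J ⊆ G° a set with a strict linear order ≺ satisfying axioms (PoSp0), (PoSp1), and (PoSp3) of a solid pospec, and suppose I = J ∖ {∅, Ω} has no least element. Then (J, ≺) is a solid pospec, i.e., it also satisfies (PoSp2) and (PoSp4). In particular: from (PoSp0),(PoSp1),(PoSp3), linearity of ≺, and the absence of a least element in I, one can derive that a ≺ b ≺ c implies c−b ≺ c−a and b−a ≺ c−a. -/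
/-- Addition on `G° = G ∪ {∅}`, with `∅` (i.e. `none`) acting as a neutral element. -/
def padd {G : Type*} [AddCommGroup G] : Option G → Option G → Option G
  | none, y => y
  | some a, none => some a
  | some a, some b => some (a + b)

/-- Subtraction on `G° = G ∪ {∅}`, with `x - ∅ = x`. -/
def psub {G : Type*} [AddCommGroup G] : Option G → Option G → Option G
  | x, none => x
  | none, some a => some (-a)
  | some b, some a => some (b - a)

variable {G : Type*} [AddCommGroup G]

/-- `prec` is a strict partial order on `J`. -/
def IsStrictPartialOn (J : Set (Option G)) (prec : Option G → Option G → Prop) : Prop :=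
  (∀ a ∈ J, ¬ prec a a) ∧
  (∀ a ∈ J, ∀ b ∈ J, ∀ c ∈ J, prec a b → prec b c → prec a c)

/-- (PoSp0): `J` is countably infinite, `∅` is its least and `Ω` its greatest element. -/
def PoSp0 (J : Set (Option G)) (prec : Option G → Option G → Prop) (Ω : G) : Prop :=
  J.Countable ∧ J.Infinite ∧ none ∈ J ∧ some Ω ∈ J ∧
  (∀ x ∈ J, x ≠ none → prec none x) ∧ (∀ x ∈ J, x ≠ some Ω → prec x (some Ω))

/-- (PoSp1): if `a ≺ b` and `(a,b) ≠ (∅,Ω)`, then `b - a ∈ I = J ∖ {∅, Ω}`. -/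
def PoSp1 (J : Set (Option G)) (prec : Option G → Option G → Prop) (Ω : G) : Prop :=
  ∀ a ∈ J, ∀ b ∈ J, prec a b → ¬(a = none ∧ b = some Ω) →
    psub b a ∈ J \ {none, some Ω}

/-- (PoSp2): `a ≺ b ≺ c` implies `c - b ≺ c - a` and `b - a ≺ c - a`. -/
def PoSp2 (J : Set (Option G)) (prec : Option G → Option G → Prop) : Prop :=
  ∀ a ∈ J, ∀ b ∈ J, ∀ c ∈ J, prec a b → prec b c →
    prec (psub c b) (psub c a) ∧ prec (psub b a) (psub c a)

/-- (PoSp3): if `a ≺ c` and `∅ ≠ b ≺ c - a`, then `a + b ∈ I` and `a ≺ a + b ≺ c`. -/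
def PoSp3 (J : Set (Option G)) (prec : Option G → Option G → Prop) (Ω : G) : Prop :=
  ∀ a ∈ J, ∀ b ∈ J, ∀ c ∈ J, prec a c → b ≠ none → prec b (psub c a) →
    padd a b ∈ J \ {none, some Ω} ∧ prec a (padd a b) ∧ prec (padd a b) c

/-- (PoSp4): for `∅ ≺ a ≺ c` and `∅ ≺ b ≺ c` there is `x ∈ I` with `x ≺ a`,
`x ≺ b` and `a - x ≺ c - b`. -/
def PoSp4 (J : Set (Option G)) (prec : Option G → Option G → Prop) (Ω : G) : Prop :=
  ∀ a ∈ J, ∀ b ∈ J, ∀ c ∈ J, prec none a → prec a c → prec none b → prec b c →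
    ∃ x ∈ J \ {none, some Ω}, prec x a ∧ prec x b ∧ prec (psub a x) (psub c b)

/-- `(J, ≺)` is a solid partially ordered spectrum in `G`. -/
def IsSolidPospec (J : Set (Option G)) (prec : Option G → Option G → Prop) (Ω : G) : Prop :=
  IsStrictPartialOn J prec ∧ PoSp0 J prec Ω ∧ PoSp1 J prec Ω ∧
  PoSp2 J prec ∧ PoSp3 J prec Ω ∧ PoSp4 J prec Ω

/-!
By linearity each inequality of (PoSp2) amounts to excluding the reverse one. `c - a ≺ b - a`
would give `c = a + (c - a) ≺ b` by (PoSp3). For `c - b ≺ c - a` the key fact is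
`∅ ≠ x ≺ y → y - x ≺ y`: a counterexample `x ≺ y ≺ y - x` propagates along the map
`(x, y) ↦ (y, y - x)`, which has order six, so the first coordinates would climb back to `x`.
For (PoSp4), the absence of a least element makes `I` dense by (PoSp3), and the witness is
`a - d` for a suitable `d ≺ c - b`.
-/

lemma psub_none_right (x : Option G) : psub x none = x := by
  cases x <;> rfl

lemma psub_ne_none {a c : Option G} (hc : c ≠ none) : psub c a ≠ none := by
  obtain ⟨γ, rfl⟩ := Option.ne_none_iff_exists'.mp hc
  cases a <;> simp [psub]

lemma padd_psub {a c : Option G} (hc : c ≠ none) : padd a (psub c a) = c := by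
  obtain ⟨γ, rfl⟩ := Option.ne_none_iff_exists'.mp hc
  cases a with
  | none => rfl
  | some α => simp [psub, padd]

lemma psub_psub {a d : Option G} (ha : a ≠ none) (hd : d ≠ none) : psub a (psub a d) = d := by
  obtain ⟨α, rfl⟩ := Option.ne_none_iff_exists'.mp ha
  obtain ⟨δ, rfl⟩ := Option.ne_none_iff_exists'.mp hd
  simp [psub]

structure IsLinearPrespec (J : Set (Option G)) (prec : Option G → Option G → Prop) (Ω : G) :
    Prop where
  irrefl : ∀ a ∈ J, ¬ prec a a
  trans : ∀ a ∈ J, ∀ b ∈ J, ∀ c ∈ J, prec a b → prec b c → prec a c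
  total : ∀ a ∈ J, ∀ b ∈ J, prec a b ∨ a = b ∨ prec b a
  none_mem : none ∈ J
  top_mem : some Ω ∈ J
  none_prec : ∀ x ∈ J, x ≠ none → prec none x
  prec_top : ∀ x ∈ J, x ≠ some Ω → prec x (some Ω)
  sub_mem : PoSp1 J prec Ω
  add_mem : PoSp3 J prec Ω

/-- A counterexample to `psub_prec_self`. -/
def IsRisingPair (J : Set (Option G)) (prec : Option G → Option G → Prop) (p : G × G) : Prop :=
  some p.1 ∈ J ∧ some p.2 ∈ J ∧ prec (some p.1) (some p.2) ∧
    prec (some p.2) (some (p.2 - p.1))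

def diffShift (p : G × G) : G × G := (p.2, p.2 - p.1)

lemma diffShift_iterate_six (p : G × G) : diffShift^[6] p = p := by
  obtain ⟨x, y⟩ := p
  simp only [Function.iterate_succ, Function.comp_apply, Function.iterate_zero, id, diffShift,
    Prod.mk.injEq]
  constructor <;> abel

namespace IsLinearPrespec

variable {J : Set (Option G)} {prec : Option G → Option G → Prop} {Ω : G}

theorem asymm (S : IsLinearPrespec J prec Ω) {a b : Option G} (ha : a ∈ J) (hb : b ∈ J)
    (hab : prec a b) : ¬ prec b a :=
  fun hba => S.irrefl a ha (S.trans a ha b hb a ha hab hba)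

theorem prec_of_ne_of_not_prec (S : IsLinearPrespec J prec Ω) {a b : Option G} (ha : a ∈ J)
    (hb : b ∈ J) (hne : a ≠ b) (hba : ¬ prec b a) : prec a b :=
  (S.total a ha b hb).resolve_right (not_or.2 ⟨hne, hba⟩)

theorem ne_none_of_prec (S : IsLinearPrespec J prec Ω) {a b : Option G} (ha : a ∈ J)
    (hab : prec a b) : b ≠ none := by
  rintro rfl
  by_cases ha0 : a = none
  · subst ha0
    exact S.irrefl none ha hab
  · exact S.asymm S.none_mem ha (S.none_prec a ha ha0) hab

theorem ne_top_of_prec (S : IsLinearPrespec J prec Ω) {a b : Option G} (hb : b ∈ J)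
    (hab : prec a b) : a ≠ some Ω := by
  rintro rfl
  by_cases hb0 : b = some Ω
  · subst hb0
    exact S.irrefl _ hb hab
  · exact S.asymm S.top_mem hb hab (S.prec_top b hb hb0)

theorem psub_mem_diff (S : IsLinearPrespec J prec Ω) {a c : Option G} (ha : a ∈ J) (hc : c ∈ J)
    (ha0 : a ≠ none) (hac : prec a c) : psub c a ∈ J \ {none, some Ω} :=
  S.sub_mem a ha c hc hac fun h => ha0 h.1

theorem psub_mem (S : IsLinearPrespec J prec Ω) {a c : Option G} (ha : a ∈ J) (hc : c ∈ J)
    (hac : prec a c) : psub c a ∈ J := by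
  by_cases ha0 : a = none
  · subst ha0
    rwa [psub_none_right]
  · exact (S.psub_mem_diff ha hc ha0 hac).1

theorem not_some_zero_prec (S : IsLinearPrespec J prec Ω) {y : Option G} (h0 : some 0 ∈ J)
    (hy : y ∈ J) : ¬ prec (some 0) y := by
  intro h
  have hΩ := S.psub_mem_diff h0 S.top_mem (by simp)
    (S.prec_top _ h0 (S.ne_top_of_prec hy h))
  simp [psub] at hΩ

theorem psub_prec_psub_right (S : IsLinearPrespec J prec Ω) {a b c : Option G} (ha : a ∈ J)
    (hb : b ∈ J) (hc : c ∈ J) (hab : prec a b) (hbc : prec b c) :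
    prec (psub b a) (psub c a) := by
  have hac := S.trans a ha b hb c hc hab hbc
  have hb0 := S.ne_none_of_prec ha hab
  have hc0 := S.ne_none_of_prec hb hbc
  refine S.prec_of_ne_of_not_prec (S.psub_mem ha hb hab) (S.psub_mem ha hc hac) ?_ ?_
  · intro h
    have hbc_eq : b = c := by rw [← padd_psub (a := a) hb0, h, padd_psub hc0]
    exact S.irrefl b hb (hbc_eq ▸ hbc)
  · intro h
    have hcb := (S.add_mem a ha _ (S.psub_mem ha hc hac) b hb hab (psub_ne_none hc0) h).2.2
    rw [padd_psub hc0] at hcb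
    exact S.asymm hb hc hbc hcb

/-- Comparing `(y - x) - y` with `Ω - x ≻ y - x` rules out `(y - x) - y ≺ Ω - x`, since their
difference would be `Ω`. -/
theorem isRisingPair_diffShift (S : IsLinearPrespec J prec Ω) {p : G × G}
    (hp : IsRisingPair J prec p) : IsRisingPair J prec (diffShift p) := by
  obtain ⟨x, y⟩ := p
  obtain ⟨hx, hy, hxy, hyz⟩ := hp
  have hz : some (y - x) ∈ J := S.psub_mem hx hy hxy
  have hzy : some (y - x - y) ∈ J := S.psub_mem hy hz hyz
  have hxΩ := S.prec_top _ hx (S.ne_top_of_prec hy hxy)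
  have hσ : some (Ω - x) ∈ J := S.psub_mem hx S.top_mem hxΩ
  have hzσ : prec (some (y - x)) (some (Ω - x)) :=
    S.psub_prec_psub_right hx hy S.top_mem hxy (S.prec_top _ hy (S.ne_top_of_prec hz hyz))
  refine ⟨hy, hz, hyz, ?_⟩
  rcases S.total _ hσ _ hzy with hσzy | hσzy | hzyσ
  · exact S.trans _ hz _ hσ _ hzy hzσ hσzy
  · exact hσzy ▸ hzσ
  · have hΩ := S.psub_mem_diff hzy hσ (by simp) hzyσ
    simp [psub] at hΩ

theorem not_isRisingPair (S : IsLinearPrespec J prec Ω) (p : G × G) :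
    ¬ IsRisingPair J prec p := by
  intro hp
  have hrising : ∀ n, IsRisingPair J prec (diffShift^[n] p) := by
    intro n
    induction n with
    | zero => exact hp
    | succ n ih =>
      rw [Function.iterate_succ_apply']
      exact S.isRisingPair_diffShift ih
  have hchain : ∀ n, prec (some p.1) (some (diffShift^[n + 1] p).1) := by
    intro n
    induction n with
    | zero => exact hp.2.2.1
    | succ n ih =>
      obtain ⟨hu, hv, huv, -⟩ := hrising (n + 1)
      rw [Function.iterate_succ_apply']
      exact S.trans _ hp.1 _ hu _ hv ih huv
  have hcycle := hchain 5
  rw [diffShift_iterate_six] at hcycle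
  exact S.irrefl _ hp.1 hcycle

theorem psub_prec_self (S : IsLinearPrespec J prec Ω) {x y : Option G} (hx : x ∈ J)
    (hy : y ∈ J) (hx0 : x ≠ none) (hxy : prec x y) : prec (psub y x) y := by
  obtain ⟨ξ, rfl⟩ := Option.ne_none_iff_exists'.mp hx0
  obtain ⟨η, rfl⟩ := Option.ne_none_iff_exists'.mp (S.ne_none_of_prec hx hxy)
  refine S.prec_of_ne_of_not_prec (S.psub_mem hx hy hxy) hy ?_
    fun h => S.not_isRisingPair (ξ, η) ⟨hx, hy, hxy, h⟩
  intro h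
  obtain rfl : ξ = 0 := sub_eq_self.mp (Option.some.inj h)
  exact S.not_some_zero_prec hx hy hxy

theorem psub_prec_psub_left (S : IsLinearPrespec J prec Ω) {a b c : Option G} (ha : a ∈ J)
    (hb : b ∈ J) (hc : c ∈ J) (hab : prec a b) (hbc : prec b c) :
    prec (psub c b) (psub c a) := by
  have hb0 := S.ne_none_of_prec ha hab
  by_cases ha0 : a = none
  · subst ha0
    rw [psub_none_right]
    exact S.psub_prec_self hb hc hb0 hbc
  have hc0 := S.ne_none_of_prec hb hbc
  have hac := S.trans a ha b hb c hc hab hbc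
  have hca := S.psub_mem_diff ha hc ha0 hac
  have hcb := S.psub_mem_diff hb hc hb0 hbc
  refine S.prec_of_ne_of_not_prec hcb.1 hca.1 ?_ ?_
  · intro h
    have hba : b = a := by rw [← psub_psub hc0 hb0, h, psub_psub hc0 ha0]
    exact S.irrefl a ha (hba ▸ hab)
  · intro h
    have hd := S.psub_mem_diff hca.1 hcb.1 (psub_ne_none hc0) h
    have hba := (S.add_mem b hb _ hd.1 c hc hbc (fun h0 => by simp [h0] at hd)
      (S.psub_prec_self hca.1 hcb.1 (psub_ne_none hc0) h)).2.1
    obtain ⟨α, rfl⟩ := Option.ne_none_iff_exists'.mp ha0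
    obtain ⟨β, rfl⟩ := Option.ne_none_iff_exists'.mp hb0
    obtain ⟨γ, rfl⟩ := Option.ne_none_iff_exists'.mp hc0
    have hsum : β + (γ - β - (γ - α)) = α := by abel
    simp only [psub, padd, hsum] at hba
    exact S.asymm ha hb hab hba

theorem posp2 (S : IsLinearPrespec J prec Ω) : PoSp2 J prec :=
  fun _ ha _ hb _ hc hab hbc =>
    ⟨S.psub_prec_psub_left ha hb hc hab hbc, S.psub_prec_psub_right ha hb hc hab hbc⟩


/-- The point between is `u + δ` for any `δ ∈ I` below `D - u`. -/
theorem exists_mem_between (S : IsLinearPrespec J prec Ω)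
    (hnoleast : ∀ m ∈ J \ {none, some Ω}, ∃ x ∈ J \ {none, some Ω}, prec x m)
    {u D : Option G} (hu : u ∈ J) (hD : D ∈ J \ {none, some Ω}) (huD : prec u D) :
    ∃ d ∈ J \ {none, some Ω}, prec u d ∧ prec d D := by
  have hDu := S.sub_mem u hu D hD.1 huD fun h => hD.2 (by simp [h.2])
  obtain ⟨δ, hδ, hδD⟩ := hnoleast _ hDu
  obtain ⟨hd, hud, hdD⟩ :=
    S.add_mem u hu δ hδ.1 D hD.1 huD (fun h => hδ.2 (by simp [h])) hδD
  exact ⟨_, hd, hud, hdD⟩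

theorem exists_prec_prec (S : IsLinearPrespec J prec Ω)
    (hnoleast : ∀ m ∈ J \ {none, some Ω}, ∃ x ∈ J \ {none, some Ω}, prec x m)
    {a b : Option G} (ha : a ∈ J \ {none, some Ω}) (hb : b ∈ J \ {none, some Ω}) :
    ∃ x ∈ J \ {none, some Ω}, prec x a ∧ prec x b := by
  rcases S.total a ha.1 b hb.1 with hab | rfl | hba
  · obtain ⟨x, hx, hxa⟩ := hnoleast a ha
    exact ⟨x, hx, hxa, S.trans x hx.1 a ha.1 b hb.1 hxa hab⟩
  · obtain ⟨x, hx, hxa⟩ := hnoleast a ha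
    exact ⟨x, hx, hxa, hxa⟩
  · obtain ⟨x, hx, hxb⟩ := hnoleast b hb
    exact ⟨x, hx, S.trans x hx.1 b hb.1 a ha.1 hxb hba, hxb⟩

/-- If `a ≼ c - b`, any `x ∈ I` below `a` and `b` works. Otherwise the witness is `a - d` for
some `d ∈ I` below `c - b` (hence below `a`), chosen above `a - b` when `b ≺ a` so that
`a - d ≺ a - (a - b) = b`. -/
theorem posp4 (S : IsLinearPrespec J prec Ω)
    (hnoleast : ∀ m ∈ J \ {none, some Ω}, ∃ x ∈ J \ {none, some Ω}, prec x m) :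
    PoSp4 J prec Ω := by
  intro a ha b hb c hc hna hac hnb hbc
  have ha0 := S.ne_none_of_prec S.none_mem hna
  have hb0 := S.ne_none_of_prec S.none_mem hnb
  have haI : a ∈ J \ {none, some Ω} := ⟨ha, by simp [ha0, S.ne_top_of_prec hc hac]⟩
  have hbI : b ∈ J \ {none, some Ω} := ⟨hb, by simp [hb0, S.ne_top_of_prec hc hbc]⟩
  have hDI := S.psub_mem_diff hb hc hb0 hbc
  by_cases hDa : prec (psub c b) a
  · obtain ⟨d, hdI, hbad, hdD⟩ : ∃ d ∈ J \ {none, some Ω},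
        (prec b a → prec (psub a b) d) ∧ prec d (psub c b) := by
      by_cases hba : prec b a
      · obtain ⟨d, hdI, habd, hdD⟩ := S.exists_mem_between hnoleast (S.psub_mem hb ha hba) hDI
          (S.psub_prec_psub_right hb ha hc hba hac)
        exact ⟨d, hdI, fun _ => habd, hdD⟩
      · obtain ⟨d, hdI, -, hdD⟩ := S.exists_mem_between hnoleast S.none_mem hDI
          (S.none_prec _ hDI.1 fun h => hDI.2 (by simp [h]))
        exact ⟨d, hdI, fun h => absurd h hba, hdD⟩
    have hd0 : d ≠ none := fun h => hdI.2 (by simp [h])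
    have hda := S.trans d hdI.1 _ hDI.1 a ha hdD hDa
    have hxa := S.psub_prec_self hdI.1 ha hd0 hda
    refine ⟨psub a d, S.psub_mem_diff hdI.1 ha hd0 hda, hxa, ?_, by rwa [psub_psub ha0 hd0]⟩
    rcases S.total a ha b hb with hab | rfl | hba
    · exact S.trans _ (S.psub_mem hdI.1 ha hda) a ha b hb hxa hab
    · exact hxa
    · have h := S.psub_prec_psub_left (S.psub_mem hb ha hba) hdI.1 ha (hbad hba) hda
      rwa [psub_psub ha0 hb0] at h
  · obtain ⟨x, hxI, hxa, hxb⟩ := S.exists_prec_prec hnoleast haI hbI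
    have hx0 : x ≠ none := fun h => hxI.2 (by simp [h])
    have hax := S.psub_prec_self hxI.1 ha hx0 hxa
    refine ⟨x, hxI, hxa, hxb, ?_⟩
    rcases S.total a ha _ hDI.1 with haD | rfl | hDa'
    · exact S.trans _ (S.psub_mem hxI.1 ha hxa) a ha _ hDI.1 hax haD
    · exact hax
    · exact absurd hDa' hDa

end IsLinearPrespec

/-- a strictly linearly ordered `(J, ≺)` satisfying (PoSp0),
(PoSp1) and (PoSp3), such that `I = J ∖ {∅, Ω}` has no least element, is a
solid pospec (in particular it satisfies (PoSp2) and (PoSp4)). -/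
theorem linear_order_solid_pospec
    (J : Set (Option G)) (prec : Option G → Option G → Prop) (Ω : G)
    (hpo : IsStrictPartialOn J prec)
    (hlin : ∀ a ∈ J, ∀ b ∈ J, prec a b ∨ a = b ∨ prec b a)
    (h0 : PoSp0 J prec Ω) (h1 : PoSp1 J prec Ω) (h3 : PoSp3 J prec Ω)
    (hnoleast : ∀ m ∈ J \ {none, some Ω}, ∃ x ∈ J \ {none, some Ω}, prec x m) :
    IsSolidPospec J prec Ω := by
  have ⟨_, _, hnone, htop, hleast, hgreatest⟩ := h0
  have S : IsLinearPrespec J prec Ω :=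
    ⟨hpo.1, hpo.2, hlin, hnone, htop, hleast, hgreatest, h1, h3⟩
  exact ⟨hpo, h0, h1, S.posp2, h3, S.posp4 hnoleast⟩
end

section
/- Let G be a countable group with a compatible strict linear order < (meaning a < b implies a+c < b+c), let Ω ∈ G be positive, and let J = {∅, Ω} ∪ I where I = {g ∈ G : 0 < g < Ω}, ordered by: x ≺ y iff x = ∅, or both differ from ∅ and x < y. Then (J, ≺) is a solid pospec if and only if G is densely ordered by < (i.e., for every a > 0 there is b with 0 < b < a). -/
variable {G : Type*} [AddCommGroup G]

/-!
Reading `lt` as a linear order turns `G` into a linearly ordered abelian group, and `J` becomes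
the interval `(0, Ω]` with `∅` adjoined as a bottom element. Axioms (PoSp1)–(PoSp3) then hold in
any ordered group by translation invariance. Density is what (PoSp0) and (PoSp4) need: it makes
`I = (0, Ω)` infinite, and (PoSp4) for `∅ ≺ a, b ≺ c` asks for an `x` with
`max 0 (a - (c - b)) < x < min a b`. Conversely, (PoSp4) applied to `a = b = min a e` and `c = Ω`,
for some `e ∈ I`, yields a positive element below any given `a > 0`.
-/
section BotLT

variable {α : Type*}

/-- The order of `WithBot α`, written out on `Option α`. -/
def botLT [LT α] (x y : Option α) : Prop :=
  x ≠ y ∧ (x = none ∨ ∃ a b : α, x = some a ∧ y = some b ∧ a < b)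

@[simp]
lemma botLT_none_left [LT α] {x : Option α} : botLT none x ↔ x ≠ none := by
  simp [botLT, eq_comm]

@[simp]
lemma not_botLT_none_right [LT α] {x : Option α} : ¬ botLT x none := by
  simp [botLT]

@[simp]
lemma botLT_some_some [Preorder α] {a b : α} : botLT (some a) (some b) ↔ a < b := by
  simpa [botLT] using fun h => h.ne

lemma exists_eq_some_of_botLT [LT α] {x y : Option α} (h : botLT x y) : ∃ b, y = some b := by
  cases y with
  | none => exact absurd h not_botLT_none_right
  | some b => exact ⟨b, rfl⟩

lemma isStrictPartialOn_botLT [Preorder α] (J : Set (Option α)) : IsStrictPartialOn J botLT := by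
  refine ⟨fun x _ h => h.1 rfl, ?_⟩
  rintro (_ | a) - (_ | b) - (_ | c) - hab hbc <;> simp_all
  exact hab.trans hbc

end BotLT

lemma denselyOrdered_iff_exists_pos_lt [PartialOrder G] [IsOrderedAddMonoid G] :
    DenselyOrdered G ↔ ∀ a : G, 0 < a → ∃ b, 0 < b ∧ b < a := by
  refine ⟨fun _ a ha => exists_between ha, fun h => ⟨fun x y hxy => ?_⟩⟩
  obtain ⟨b, hb0, hb⟩ := h (y - x) (sub_pos.2 hxy)
  exact ⟨x + b, lt_add_of_pos_right x hb0, lt_sub_iff_add_lt'.1 hb⟩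

section IntervalSpec

variable [LinearOrder G] {Ω : G}

def intervalSpec (Ω : G) : Set (Option G) :=
  insert none (insert (some Ω) (some '' Set.Ioo 0 Ω))

lemma none_mem_intervalSpec : none ∈ intervalSpec Ω := Set.mem_insert _ _

lemma some_mem_intervalSpec (hΩ : 0 < Ω) {g : G} :
    some g ∈ intervalSpec Ω ↔ 0 < g ∧ g ≤ Ω := by
  simp only [intervalSpec, Set.mem_insert_iff, reduceCtorEq, Option.some_inj, Set.mem_image,
    Set.mem_Ioo, exists_eq_right, false_or]
  constructor
  · rintro (rfl | ⟨h0, hΩ⟩)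
    exacts [⟨hΩ, le_rfl⟩, ⟨h0, hΩ.le⟩]
  · rintro ⟨h0, hΩ⟩
    exact hΩ.eq_or_lt.imp id (⟨h0, ·⟩)

lemma intervalSpec_diff : intervalSpec Ω \ {none, some Ω} = some '' Set.Ioo 0 Ω := by
  ext x
  constructor
  · rintro ⟨hx | hx | hx, hx'⟩ <;> simp_all
  · rintro ⟨g, hg, rfl⟩
    exact ⟨Or.inr (Or.inr ⟨g, hg, rfl⟩), by simp [hg.2.ne]⟩

@[simp]
lemma some_mem_intervalSpec_diff {g : G} :
    some g ∈ intervalSpec Ω \ {none, some Ω} ↔ 0 < g ∧ g < Ω := by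
  simp [intervalSpec_diff]

lemma poSp0_intervalSpec [Countable G] [DenselyOrdered G] (hΩ : 0 < Ω) :
    PoSp0 (intervalSpec Ω) botLT Ω := by
  refine ⟨Set.to_countable _, ?_, none_mem_intervalSpec, (some_mem_intervalSpec hΩ).2 ⟨hΩ, le_rfl⟩,
    fun x _ hx => botLT_none_left.2 hx, ?_⟩
  · exact ((Set.Ioo_infinite hΩ).image (Option.some_injective G).injOn).mono
      (Set.subset_insert _ _ |>.trans (Set.subset_insert _ _))
  · rintro (_ | g) hg hgΩ
    · simp
    · exact botLT_some_some.2 (((some_mem_intervalSpec hΩ).1 hg).2.lt_of_ne (by simpa using hgΩ))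

lemma exists_pos_lt_of_poSp4 (hΩ : 0 < Ω) (hI : (intervalSpec Ω \ {none, some Ω}).Nonempty)
    (h4 : PoSp4 (intervalSpec Ω) botLT Ω) {a : G} (ha : 0 < a) : ∃ b, 0 < b ∧ b < a := by
  rw [PoSp4, intervalSpec_diff] at h4
  rw [intervalSpec_diff] at hI
  obtain ⟨_, ⟨e, he, rfl⟩⟩ := hI
  have hm : some (min a e) ∈ intervalSpec Ω :=
    (some_mem_intervalSpec hΩ).2 ⟨lt_min ha he.1, (min_le_right a e).trans he.2.le⟩
  have hmΩ : botLT (some (min a e)) (some Ω) :=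
    botLT_some_some.2 ((min_le_right a e).trans_lt he.2)
  obtain ⟨x, hx, hxm, -⟩ := h4 _ hm _ hm _ ((some_mem_intervalSpec hΩ).2 ⟨hΩ, le_rfl⟩)
    (by simp) hmΩ (by simp) hmΩ
  obtain ⟨b, hb, rfl⟩ := hx
  exact ⟨b, hb.1, (botLT_some_some.1 hxm).trans_le (min_le_left a e)⟩

variable [IsOrderedAddMonoid G]

lemma poSp1_intervalSpec (hΩ : 0 < Ω) : PoSp1 (intervalSpec Ω) botLT Ω := by
  rintro (_ | a) ha (_ | b) hb hab hne
  · simp at hab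
  · simp only [psub, some_mem_intervalSpec_diff]
    rw [some_mem_intervalSpec hΩ] at hb
    exact ⟨hb.1, hb.2.lt_of_ne (by simpa using hne)⟩
  · simp at hab
  · rw [some_mem_intervalSpec hΩ] at ha hb
    rw [botLT_some_some] at hab
    simp only [psub, some_mem_intervalSpec_diff, sub_pos]
    exact ⟨hab, (sub_lt_self b ha.1).trans_le hb.2⟩

lemma poSp2_intervalSpec (hΩ : 0 < Ω) : PoSp2 (intervalSpec Ω) botLT := by
  intro a ha b hb c _ hab hbc
  obtain ⟨b, rfl⟩ := exists_eq_some_of_botLT hab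
  obtain ⟨c, rfl⟩ := exists_eq_some_of_botLT hbc
  rw [botLT_some_some] at hbc
  cases a with
  | none =>
    rw [some_mem_intervalSpec hΩ] at hb
    simp only [psub, botLT_some_some]
    exact ⟨sub_lt_self c hb.1, hbc⟩
  | some a =>
    rw [botLT_some_some] at hab
    simp only [psub, botLT_some_some]
    exact ⟨sub_lt_sub_left hab c, sub_lt_sub_right hbc a⟩

lemma poSp3_intervalSpec (hΩ : 0 < Ω) : PoSp3 (intervalSpec Ω) botLT Ω := by
  intro a ha b hb c hc hac hb0 hbc
  obtain ⟨b, rfl⟩ := Option.ne_none_iff_exists'.1 hb0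
  obtain ⟨c, rfl⟩ := exists_eq_some_of_botLT hac
  rw [some_mem_intervalSpec hΩ] at hb hc
  cases a with
  | none =>
    simp only [psub, botLT_some_some] at hbc
    simpa only [padd, some_mem_intervalSpec_diff, botLT_none_left, botLT_some_some]
      using ⟨⟨hb.1, hbc.trans_le hc.2⟩, Option.some_ne_none b, hbc⟩
  | some a =>
    rw [some_mem_intervalSpec hΩ] at ha
    simp only [psub, botLT_some_some, lt_sub_iff_add_lt'] at hbc
    have hab : a < a + b := lt_add_of_pos_right a hb.1
    simpa only [padd, some_mem_intervalSpec_diff, botLT_some_some]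
      using ⟨⟨ha.1.trans hab, hbc.trans_le hc.2⟩, hab, hbc⟩

lemma poSp4_intervalSpec [DenselyOrdered G] (hΩ : 0 < Ω) : PoSp4 (intervalSpec Ω) botLT Ω := by
  intro a ha b hb c _ ha0 hac hb0 hbc
  obtain ⟨a, rfl⟩ := exists_eq_some_of_botLT ha0
  obtain ⟨b, rfl⟩ := exists_eq_some_of_botLT hb0
  obtain ⟨c, rfl⟩ := exists_eq_some_of_botLT hac
  rw [some_mem_intervalSpec hΩ] at ha hb
  rw [botLT_some_some] at hac hbc
  have hda : a - (c - b) < a := sub_lt_self a (sub_pos.2 hbc)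
  have hdb : a - (c - b) < b := by
    rw [show a - (c - b) = b - (c - a) by abel]
    exact sub_lt_self b (sub_pos.2 hac)
  obtain ⟨x, hlo, hhi⟩ :=
    exists_between (max_lt (lt_min ha.1 hb.1) (lt_min hda hdb) : max 0 (a - (c - b)) < min a b)
  rw [max_lt_iff] at hlo
  rw [lt_min_iff] at hhi
  refine ⟨some x, some_mem_intervalSpec_diff.2 ⟨hlo.1, hhi.1.trans_le ha.2⟩,
    botLT_some_some.2 hhi.1, botLT_some_some.2 hhi.2, ?_⟩
  simpa only [psub, botLT_some_some, sub_lt_comm] using hlo.2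

theorem isSolidPospec_intervalSpec_iff [Countable G] (hΩ : 0 < Ω) :
    IsSolidPospec (intervalSpec Ω) botLT Ω ↔ DenselyOrdered G := by
  constructor
  · rintro ⟨-, ⟨-, hinf, -⟩, -, -, -, h4⟩
    exact denselyOrdered_iff_exists_pos_lt.2 fun _ =>
      exists_pos_lt_of_poSp4 hΩ (hinf.sdiff (Set.toFinite _)).nonempty h4
  · intro _
    exact ⟨isStrictPartialOn_botLT _, poSp0_intervalSpec hΩ, poSp1_intervalSpec hΩ,
      poSp2_intervalSpec hΩ, poSp3_intervalSpec hΩ, poSp4_intervalSpec hΩ⟩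

end IntervalSpec

/-- for a countable group `G` with a compatible strict linear
order `lt` and a positive `Ω`, the set `J = {∅, Ω} ∪ {g | 0 < g < Ω}` with the
induced order is a solid pospec iff `G` is densely ordered by `lt`. -/
theorem interval_pospec_iff_densely_ordered [Countable G]
    (lt : G → G → Prop)
    (hirr : ∀ a : G, ¬ lt a a)
    (htrans : ∀ a b c : G, lt a b → lt b c → lt a c)
    (htrich : ∀ a b : G, lt a b ∨ a = b ∨ lt b a)
    (hcompat : ∀ a b c : G, lt a b → lt (a + c) (b + c))
    (Ω : G) (hΩ : lt 0 Ω) :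
    IsSolidPospec
      (insert none (insert (some Ω) (some '' {g : G | lt 0 g ∧ lt g Ω})))
      (fun x y => x ≠ y ∧
        (x = none ∨ ∃ a b : G, x = some a ∧ y = some b ∧ lt a b)) Ω
    ↔ ∀ a : G, lt 0 a → ∃ b : G, lt 0 b ∧ lt b a := by
  have : IsStrictTotalOrder G lt :=
    { trichotomous a b hab hba := ((htrich a b).resolve_left hab).resolve_right hba
      irrefl := hirr
      trans := htrans }
  let := Classical.decRel lt
  let := linearOrderOfSTO lt
  have : IsOrderedAddMonoid G :=
    { add_le_add_left a b hab c := hab.imp (congrArg (· + c)) (hcompat a b c) }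
  exact (isSolidPospec_intervalSpec_iff hΩ).trans denselyOrdered_iff_exists_pos_lt
end

section
/- Let V be a nontrivial vector space over ℚ with a basis {e_t}_{t∈T} and a linear order on T. Define, for nonzero v ∈ V with coordinates α_v: T → ℚ (finitely supported), q(v) to be the coefficient α_v(s) at the least index s with α_v(s) ≠ 0, and set u < w iff u ≠ w and q(u−w) < 0. Then < is a compatible strict linear order on V (a < b implies a+c < b+c), and V is densely ordered by < (for every v > 0 there is w with 0 < w < v). -/
/-!
Through the coordinate map `v ↦ toLex (bV.repr v)`, `basisLT` is the lexicographic order on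
`T →₀ ℚ`: the first coordinate where `u` and `w` differ is the first nonzero coordinate of
`u - w`. That order is a linear order compatible with addition and with scaling by positive
rationals, so `v / 2` lies strictly between `0` and any positive `v`.
-/

/-- The first (w.r.t. the order on the index set) nonzero coordinate of a
vector with respect to the basis `bV`; it equals `0` for the zero vector. -/
noncomputable def firstCoeff {T : Type*} [LinearOrder T] {V : Type*} [AddCommGroup V]
    [Module ℚ V] (bV : Module.Basis T ℚ V) (v : V) : ℚ :=
  if h : ((bV.repr v).support).Nonempty then (bV.repr v) ((bV.repr v).support.min' h)
  else 0

/-- The order on `V` determined by the sign of the first nonzero coordinate: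
`u < w` iff `u ≠ w` and `q(u - w) < 0`. -/
def basisLT {T : Type*} [LinearOrder T] {V : Type*} [AddCommGroup V]
    [Module ℚ V] (bV : Module.Basis T ℚ V) (u w : V) : Prop :=
  u ≠ w ∧ firstCoeff bV (u - w) < 0

namespace Finsupp

variable {α R N : Type*} [LinearOrder α]

theorem Lex.toLex_lt_zero_iff [Zero N] [LinearOrder N] {f : α →₀ N} :
    toLex f < 0 ↔ ∃ h : f.support.Nonempty, f (f.support.min' h) < 0 := by
  rw [Lex.lt_iff]
  constructor
  · rintro ⟨i, hbelow, hi⟩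
    have hmem : i ∈ f.support := mem_support_iff.mpr hi.ne
    refine ⟨⟨i, hmem⟩, ?_⟩
    have hmin : f.support.min' ⟨i, hmem⟩ = i :=
      (f.support.min'_le i hmem).antisymm <| not_lt.mp fun hlt =>
        mem_support_iff.mp (f.support.min'_mem _) (hbelow _ hlt)
    rwa [hmin]
  · rintro ⟨h, hmin⟩
    exact ⟨_, fun j hj => notMem_support_iff.mp fun hj' => (f.support.min'_le j hj').not_gt hj,
      hmin⟩

instance Lex.posSMulStrictMono [Zero R] [Preorder R] [Zero N] [PartialOrder N] [SMulWithZero R N]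
    [PosSMulStrictMono R N] : PosSMulStrictMono R (Lex (α →₀ N)) where
  smul_lt_smul_of_pos_left c hc f g := by
    rintro ⟨i, hbelow, hi⟩
    exact ⟨i, fun j hj => congrArg (c • ·) (hbelow j hj), smul_lt_smul_of_pos_left hi hc⟩

end Finsupp

section basisLT

variable {T V : Type*} [LinearOrder T] [AddCommGroup V] [Module ℚ V] (bV : Module.Basis T ℚ V)

theorem firstCoeff_lt_zero_iff {v : V} : firstCoeff bV v < 0 ↔ toLex (bV.repr v) < 0 := by
  rw [Finsupp.Lex.toLex_lt_zero_iff, firstCoeff]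
  split_ifs with h <;> simp [h]

theorem basisLT_iff {u w : V} : basisLT bV u w ↔ toLex (bV.repr u) < toLex (bV.repr w) := by
  rw [basisLT, firstCoeff_lt_zero_iff, map_sub, toLex_sub, sub_neg]
  exact and_iff_right_of_imp fun h huw => h.ne (by rw [huw])

end basisLT

theorem basisLT_compatible_dense_general {T : Type*} [LinearOrder T] {V : Type*}
    [AddCommGroup V] [Module ℚ V] (bV : Module.Basis T ℚ V) :
    (∀ u : V, ¬ basisLT bV u u) ∧
    (∀ u v w : V, basisLT bV u v → basisLT bV v w → basisLT bV u w) ∧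
    (∀ u w : V, basisLT bV u w ∨ u = w ∨ basisLT bV w u) ∧
    (∀ u w c : V, basisLT bV u w → basisLT bV (u + c) (w + c)) ∧
    (∀ v : V, basisLT bV 0 v → ∃ w : V, basisLT bV 0 w ∧ basisLT bV w v) := by
  simp only [basisLT_iff]
  have repr_injective : Function.Injective fun v : V => toLex (bV.repr v) :=
    toLex.injective.comp bV.repr.injective
  refine ⟨fun _ => lt_irrefl _, fun _ _ _ => lt_trans, fun u w => ?_, fun u w c h => ?_,
    fun v hv => ⟨(2⁻¹ : ℚ) • v, ?_⟩⟩
  · rcases lt_trichotomy (toLex (bV.repr u)) (toLex (bV.repr w)) with h | h | h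
    exacts [.inl h, .inr (.inl (repr_injective h)), .inr (.inr h)]
  · simpa only [map_add, toLex_add] using add_lt_add_left h _
  · simp only [map_zero, toLex_zero, map_smul, toLex_smul] at hv ⊢
    have half_pos : 0 < (2⁻¹ : ℚ) • toLex (bV.repr v) := smul_pos (by norm_num) hv
    refine ⟨half_pos, ?_⟩
    calc (2⁻¹ : ℚ) • toLex (bV.repr v)
        < (2⁻¹ : ℚ) • toLex (bV.repr v) + (2⁻¹ : ℚ) • toLex (bV.repr v) :=
          lt_add_of_pos_right _ half_pos
      _ = toLex (bV.repr v) := by rw [← add_smul]; norm_num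

/-- this order is a compatible (translation-invariant) strict
linear order on `V`, and `V` is densely ordered by it. -/
theorem basisLT_compatible_dense {T : Type*} [LinearOrder T] {V : Type*}
    [AddCommGroup V] [Module ℚ V] [Nontrivial V] (bV : Module.Basis T ℚ V) :
    (∀ u : V, ¬ basisLT bV u u) ∧
    (∀ u v w : V, basisLT bV u v → basisLT bV v w → basisLT bV u w) ∧
    (∀ u w : V, basisLT bV u w ∨ u = w ∨ basisLT bV w u) ∧
    (∀ u w c : V, basisLT bV u w → basisLT bV (u + c) (w + c)) ∧
    (∀ v : V, basisLT bV 0 v → ∃ w : V, basisLT bV 0 w ∧ basisLT bV w v) :=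
  basisLT_compatible_dense_general bV
end

section
/- Let Q be a countable subset of ℓ∞ (bounded real sequences). Then there exists a sequence (a_n) of positive reals with Σ a_n = 1 such that the map Q → ℝ sending (x_n) to Σ a_n x_n is injective. -/
/-!
Take geometric weights `aₙ = (1 - t) tⁿ` with `0 < t < 1`, so that `∑ aₙ xₙ = (1 - t) f_x(t)`
where `f_x(t) = ∑ xₙ tⁿ`. For distinct `x, y ∈ Q` the power series `f_{x-y}` has bounded,
not all zero coefficients, so it is analytic and not identically zero on `(-1, 1)`; its zeros
there are isolated, hence countable. Since `Q - Q` is countable, only countably many `t` are bad,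
and any other `t ∈ (0, 1)` works.
-/

open FormalMultilinearSeries Filter Set
open scoped Pointwise

theorem AnalyticOnNhd.countable_preimage_zero_inter {𝕜 E : Type*} [NontriviallyNormedField 𝕜]
    [SecondCountableTopology 𝕜] [NormedAddCommGroup E] [NormedSpace 𝕜 E]
    {f : 𝕜 → E} {U : Set 𝕜} (hf : AnalyticOnNhd 𝕜 f U) (hU : IsPreconnected U)
    (hf₀ : ¬EqOn f 0 U) : (f ⁻¹' {0} ∩ U).Countable :=
  (HereditarilyLindelofSpace.isLindelof _).countable_of_isDiscrete <|
    isDiscrete_of_codiscreteWithin <|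
      (hf.eqOn_zero_or_eventually_ne_zero_of_preconnected hU).resolve_left hf₀

section BoundedCoefficients

variable {c : ℕ → ℝ} {C : ℝ}

theorem summable_mul_pow_of_abs_le (hC : ∀ n, |c n| ≤ C) {t : ℝ} (ht : |t| < 1) :
    Summable fun n ↦ c n * t ^ n := by
  refine .of_norm_bounded ((summable_geometric_of_lt_one (abs_nonneg t) ht).mul_left C)
    fun n ↦ ?_
  rw [norm_mul, norm_pow, Real.norm_eq_abs, Real.norm_eq_abs]
  exact mul_le_mul_of_nonneg_right (hC n) (pow_nonneg (abs_nonneg t) n)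

theorem one_le_radius_ofScalars (hC : ∀ n, |c n| ≤ C) : 1 ≤ (ofScalars ℝ c).radius := by
  simpa using (ofScalars ℝ c).le_radius_of_bound C (r := 1) fun n ↦ by simpa using hC n

theorem hasFPowerSeriesOnBall_ofScalarsSum (hC : ∀ n, |c n| ≤ C) :
    HasFPowerSeriesOnBall (ofScalarsSum (E := ℝ) c) (ofScalars ℝ c) 0 1 :=
  ((ofScalars ℝ c).hasFPowerSeriesOnBall (zero_lt_one.trans_le (one_le_radius_ofScalars hC))).mono
    zero_lt_one (one_le_radius_ofScalars hC)

theorem countable_setOf_tsum_mul_pow_eq_zero (hC : ∀ n, |c n| ≤ C) (hc : c ≠ 0) :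
    {t ∈ Metric.ball (0 : ℝ) 1 | ∑' n, c n * t ^ n = 0}.Countable := by
  have hf := hasFPowerSeriesOnBall_ofScalarsSum hC
  have hball : Metric.eball (0 : ℝ) 1 = Metric.ball 0 1 := by
    simpa using Metric.eball_coe (x := (0 : ℝ)) (ε := 1)
  have hzeros := (hball ▸ hf.analyticOnNhd).countable_preimage_zero_inter
    (convex_ball 0 1).isPreconnected fun h ↦ hc <| (ofScalars_series_eq_zero ℝ).mp <|
      hf.hasFPowerSeriesAt.eq_zero_of_eventually <|
        eventually_of_mem (Metric.ball_mem_nhds 0 one_pos) h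
  convert hzeros using 1
  ext t
  simp [ofScalars_sum_eq, and_comm]

end BoundedCoefficients

theorem exists_mem_Ioo_forall_tsum_mul_pow_ne_zero {D : Set (ℕ → ℝ)} (hD : D.Countable)
    (hDb : ∀ d ∈ D, ∃ C, ∀ n, |d n| ≤ C) (hD₀ : 0 ∉ D) :
    ∃ t ∈ Ioo (0 : ℝ) 1, ∀ d ∈ D, ∑' n, d n * t ^ n ≠ 0 := by
  set B := ⋃ d ∈ D, {t ∈ Metric.ball (0 : ℝ) 1 | ∑' n, d n * t ^ n = 0}
  have hB : B.Countable := hD.biUnion fun d hd ↦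
    let ⟨_, hC⟩ := hDb d hd
    countable_setOf_tsum_mul_pow_eq_zero hC (ne_of_mem_of_not_mem hd hD₀)
  obtain ⟨t, htB, ht⟩ := (hB.dense_compl ℝ).exists_mem_open isOpen_Ioo (nonempty_Ioo.mpr one_pos)
  have ht_ball : t ∈ Metric.ball (0 : ℝ) 1 := by
    rw [mem_ball_zero_iff, Real.norm_eq_abs, abs_lt]
    exact ⟨by linarith [ht.1], ht.2⟩
  refine ⟨t, ht, fun d hd hzero ↦ htB ?_⟩
  exact mem_biUnion hd ⟨ht_ball, hzero⟩

theorem exists_forall_abs_le_of_mem_sub {ι : Type*} {Q : Set (ι → ℝ)}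
    (hQb : ∀ x ∈ Q, ∃ C : ℝ, ∀ n, |x n| ≤ C) : ∀ d ∈ Q - Q, ∃ C : ℝ, ∀ n, |d n| ≤ C := by
  rintro _ ⟨x, hx, y, hy, rfl⟩
  obtain ⟨Cx, hCx⟩ := hQb x hx
  obtain ⟨Cy, hCy⟩ := hQb y hy
  exact ⟨Cx + Cy, fun n ↦ (abs_sub (x n) (y n)).trans (add_le_add (hCx n) (hCy n))⟩

theorem injOn_tsum_mul_pow {Q : Set (ℕ → ℝ)} (hQb : ∀ x ∈ Q, ∃ C : ℝ, ∀ n, |x n| ≤ C) {t : ℝ}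
    (ht : |t| < 1) (hQt : ∀ d ∈ (Q - Q) \ {0}, ∑' n, d n * t ^ n ≠ 0) :
    InjOn (fun x : ℕ → ℝ ↦ ∑' n, x n * t ^ n) Q := by
  intro x hx y hy hxy
  by_contra hne
  obtain ⟨Cx, hCx⟩ := hQb x hx
  obtain ⟨Cy, hCy⟩ := hQb y hy
  refine hQt (x - y) ⟨sub_mem_sub hx hy, sub_ne_zero.mpr hne⟩ ?_
  simp only [Pi.sub_apply, sub_mul]
  rw [(summable_mul_pow_of_abs_le hCx ht).tsum_sub (summable_mul_pow_of_abs_le hCy ht)]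
  exact sub_eq_zero.mpr hxy

/-- for every countable set `Q` of bounded real sequences there
is a sequence of positive weights summing to `1` such that the induced
functional `x ↦ ∑ aₙ xₙ` is injective on `Q`. -/
theorem exists_injective_weights (Q : Set (ℕ → ℝ)) (hQc : Q.Countable)
    (hQb : ∀ x ∈ Q, ∃ C : ℝ, ∀ n : ℕ, |x n| ≤ C) :
    ∃ a : ℕ → ℝ, (∀ n : ℕ, 0 < a n) ∧ Summable a ∧ (∑' n : ℕ, a n) = 1 ∧
      Set.InjOn (fun x : ℕ → ℝ => ∑' n : ℕ, a n * x n) Q := by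
  have hQQ : (Q - Q).Countable := image2_sub (s := Q) (t := Q) ▸ hQc.image2 hQc _
  obtain ⟨t, ⟨ht₀, ht₁⟩, ht⟩ := exists_mem_Ioo_forall_tsum_mul_pow_ne_zero
    (D := (Q - Q) \ {0}) (hQQ.mono sdiff_subset)
    (fun d hd ↦ exists_forall_abs_le_of_mem_sub hQb d hd.1) (fun h ↦ h.2 rfl)
  have h1t : 0 < 1 - t := sub_pos.mpr ht₁
  refine ⟨fun n ↦ (1 - t) * t ^ n, fun n ↦ mul_pos h1t (pow_pos ht₀ n),
    (summable_geometric_of_lt_one ht₀.le ht₁).mul_left _, ?_, ?_⟩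
  · rw [tsum_mul_left, tsum_geometric_of_lt_one ht₀.le ht₁, mul_inv_cancel₀ h1t.ne']
  · intro x hx y hy hxy
    have hweights : ∀ z : ℕ → ℝ, ∑' n, (1 - t) * t ^ n * z n = (1 - t) * ∑' n, z n * t ^ n :=
      fun z ↦ by rw [← tsum_mul_left]; exact tsum_congr fun n ↦ by ring
    refine injOn_tsum_mul_pow hQb (by rwa [abs_of_pos ht₀]) ht hx hy ?_
    exact mul_left_cancel₀ h1t.ne' (by simpa only [hweights] using hxy)
end

section
/- Suppose a homogeneous semigroup-valued measure λ on 𝔹 has the Rokhlin property (Aut(λ) has a dense conjugacy class) and the top element 1 admits an equi-measured N-partition for some N > 1 (a partition of 𝔹 into N nonzero pieces of equal λ-measure). Then every proper element j ∈ 𝔹 also admits an equi-measured N-partition with respect to λ. -/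
variable {B : Type*} [BooleanAlgebra B] {S : Type*} [AddCommMonoid S]

/-- `Aut(μ)` has a dense conjugacy class (Rokhlin property), expressed via the
pointwise-convergence topology: some `h ∈ Aut(μ)` has conjugates approximating
any `g ∈ Aut(μ)` (together with inverses) on any finite set. -/
def RokhlinProperty (μ : B → S) : Prop :=
  ∃ h : B ≃o B, PreservesMeas μ h ∧
    ∀ g : B ≃o B, PreservesMeas μ g → ∀ F : Finset B,
      ∃ u : B ≃o B, PreservesMeas μ u ∧
        ∀ x ∈ F, u (h (u.symm x)) = g x ∧ u (h.symm (u.symm x)) = g.symm x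

/-- `j` admits an equi-measured `N`-partition w.r.t. `μ`. -/
def AdmitsEquiPartition (μ : B → S) (N : ℕ) (j : B) : Prop :=
  ∃ b : Fin N → B, (∀ i, b i ≠ ⊥) ∧ (∀ i k : Fin N, i ≠ k → Disjoint (b i) (b k)) ∧
    Finset.univ.sup b = j ∧ ∀ i k : Fin N, μ (b i) = μ (b k)

/-!
Let `b 0, …, b (N-1)` be an equi-measured partition of `⊤`. Its pieces are proper and their
complements have equal measure, so homogeneity gives `λ`-automorphisms `b i ↦ b (i+1)`; glued
along the partition they form one `λ`-automorphism `G` permuting the pieces cyclically.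
Let `h` have dense conjugacy class. A conjugate `u h u⁻¹` agrees with `G` on the pieces, so `h`
permutes the pieces `c i = u⁻¹ (b i)` cyclically; a conjugate `v h v⁻¹` fixes `j`, so `h` fixes
`j' = v⁻¹ j`. Then `h` permutes the pieces `j' ⊓ c i` cyclically, hence they are nonzero and
of equal measure, and `v` carries this equi-measured partition of `j'` to one of `j`.
-/

open Function

lemma IsBAMeasure.finset_sup {μ : B → S} (hμ : IsBAMeasure μ) {ι : Type*} (s : Finset ι)
    {f : ι → B} (hf : (s : Set ι).PairwiseDisjoint f) :
    μ (s.sup f) = ∑ i ∈ s, μ (f i) := by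
  classical
  induction s using Finset.induction_on with
  | empty => simpa using hμ.1
  | @insert a s ha ih =>
    rw [Finset.coe_insert] at hf
    rw [Finset.sup_insert, Finset.sum_insert ha, ← ih (hf.subset (Set.subset_insert _ _))]
    refine hμ.2 _ _ (Finset.disjoint_sup_right.2 fun i hi => ?_)
    exact hf (Set.mem_insert _ _) (Set.mem_insert_of_mem _ hi) (by rintro rfl; exact ha hi)

lemma AdmitsEquiPartition.map {T : Type*} {μ : B → T} {N : ℕ} {j : B}
    (hj : AdmitsEquiPartition μ N j) {φ : B ≃o B} (hφ : PreservesMeas μ φ) :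
    AdmitsEquiPartition μ N (φ j) := by
  obtain ⟨b, hb0, hbd, hbsup, hbeq⟩ := hj
  refine ⟨φ ∘ b, fun i => ?_, fun i k hik => (hbd i k hik).map_orderIso φ, ?_, fun i k => ?_⟩
  · simpa using hb0 i
  · rw [← map_finset_sup, hbsup]
  · exact (hφ _).trans ((hbeq i k).trans (hφ _).symm)

lemma Fin.forall_of_imp_add_one {N : ℕ} [NeZero N] {p : Fin N → Prop}
    (hp : ∀ i, p i → p (i + 1)) {i : Fin N} (hi : p i) (k : Fin N) : p k := by
  open Fin.NatCast in
  have hiter : ∀ m : ℕ, p (i + m) := by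
    intro m
    induction m with
    | zero => simpa using hi
    | succ m ih => simpa [← add_assoc] using hp _ ih
  simpa using hiter (k - i).val

section Glue

variable {ι : Type*} [Fintype ι]

def glue (b : ι → B) (ψ : ι → B ≃o B) (x : B) : B :=
  Finset.univ.sup fun i => ψ i (x ⊓ b i)

lemma glue_mono (b : ι → B) (ψ : ι → B ≃o B) : Monotone (glue b ψ) :=
  fun _ _ hxy => Finset.sup_mono_fun fun i _ => (ψ i).monotone (inf_le_inf_right _ hxy)

lemma finset_sup_inf_eq_self_of_sup_eq_top {b : ι → B} (hb : Finset.univ.sup b = ⊤) (x : B) :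
    (Finset.univ.sup fun i => x ⊓ b i) = x := by
  rw [← Finset.sup_inf_distrib_left, hb, inf_top_eq]

lemma finset_sup_inf_eq_of_le {c : ι → B} (hc : Pairwise (Disjoint on c)) {v : ι → B}
    (hv : ∀ k, v k ≤ c k) (i : ι) : Finset.univ.sup v ⊓ c i = v i := by
  rw [Finset.sup_inf_distrib_right]
  refine le_antisymm (Finset.sup_le fun k _ => ?_) (le_trans (le_inf le_rfl (hv i))
    (Finset.le_sup (f := fun k => v k ⊓ c i) (Finset.mem_univ i)))
  rcases eq_or_ne k i with rfl | hki
  · exact inf_le_left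
  · exact ((hc hki).mono_left (hv k)).eq_bot ▸ bot_le

variable {b c : ι → B} {ψ : ι → B ≃o B}

lemma glue_inf (hc : Pairwise (Disjoint on c)) (hψ : ∀ i, ψ i (b i) = c i) (x : B) (i : ι) :
    glue b ψ x ⊓ c i = ψ i (x ⊓ b i) :=
  finset_sup_inf_eq_of_le hc (fun k => hψ k ▸ (ψ k).monotone inf_le_right) i

lemma glue_symm_glue (hc : Pairwise (Disjoint on c)) (hb : Finset.univ.sup b = ⊤)
    (hψ : ∀ i, ψ i (b i) = c i) (x : B) :
    glue c (fun i => (ψ i).symm) (glue b ψ x) = x := by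
  change (Finset.univ.sup fun i => (ψ i).symm (glue b ψ x ⊓ c i)) = x
  simp_rw [glue_inf hc hψ, OrderIso.symm_apply_apply]
  exact finset_sup_inf_eq_self_of_sup_eq_top hb x

lemma IsBAMeasure.apply_glue {μ : B → S} (hμ : IsBAMeasure μ) (hb : Pairwise (Disjoint on b))
    (hbsup : Finset.univ.sup b = ⊤) (hc : Pairwise (Disjoint on c))
    (hψm : ∀ i, PreservesMeas μ (ψ i)) (hψ : ∀ i, ψ i (b i) = c i) (x : B) :
    μ (glue b ψ x) = μ x := by
  have hle : ∀ i, ψ i (x ⊓ b i) ≤ c i := fun i => hψ i ▸ (ψ i).monotone inf_le_right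
  calc μ (glue b ψ x) = ∑ i, μ (ψ i (x ⊓ b i)) :=
        hμ.finset_sup _ fun i _ k _ hik => (hc hik).mono (hle i) (hle k)
    _ = ∑ i, μ (x ⊓ b i) := Finset.sum_congr rfl fun i _ => hψm i _
    _ = μ (Finset.univ.sup fun i => x ⊓ b i) :=
        (hμ.finset_sup _ fun i _ k _ hik => (hb hik).mono inf_le_right inf_le_right).symm
    _ = μ x := by rw [finset_sup_inf_eq_self_of_sup_eq_top hbsup]

theorem exists_preservesMeas_forall_apply_eq {μ : B → S} (hμ : IsBAMeasure μ)
    (hb : Pairwise (Disjoint on b)) (hbsup : Finset.univ.sup b = ⊤)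
    (hc : Pairwise (Disjoint on c)) (hcsup : Finset.univ.sup c = ⊤)
    (hψm : ∀ i, PreservesMeas μ (ψ i)) (hψ : ∀ i, ψ i (b i) = c i) :
    ∃ G : B ≃o B, PreservesMeas μ G ∧ ∀ i, G (b i) = c i := by
  have hψ' : ∀ i, (ψ i).symm (c i) = b i := fun i => by rw [← hψ i, OrderIso.symm_apply_apply]
  let G : B ≃o B := Equiv.toOrderIso
    ⟨glue b ψ, glue c fun i => (ψ i).symm, glue_symm_glue hc hbsup hψ, glue_symm_glue hb hcsup hψ'⟩
    (glue_mono _ _) (glue_mono _ _)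
  refine ⟨G, hμ.apply_glue hb hbsup hc hψm hψ, fun i => le_antisymm ?_ ?_⟩
  · have hbi : b i ≤ G.symm (c i) := by
      rw [← inf_eq_right]
      exact (glue_inf hb hψ' (c i) i).trans (by rw [inf_idem, hψ'])
    simpa using G.monotone hbi
  · rw [← inf_eq_right]
    exact (glue_inf hc hψ (b i) i).trans (by rw [inf_idem, hψ])

end Glue

lemma compl_eq_finset_sup_erase {ι : Type*} [Fintype ι] [DecidableEq ι] {b : ι → B}
    (hb : Pairwise (Disjoint on b)) (hbsup : Finset.univ.sup b = ⊤) (i : ι) :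
    (b i)ᶜ = (Finset.univ.erase i).sup b := by
  refine (IsCompl.of_eq ?_ ?_).compl_eq
  · exact (Finset.disjoint_sup_right.2 fun k hk => hb (Finset.ne_of_mem_erase hk).symm).eq_bot
  · rw [← Finset.sup_insert, Finset.insert_erase (Finset.mem_univ i), hbsup]

theorem exists_preservesMeas_cycle {μ : B → S} (hμ : IsBAMeasure μ) (hhom : MeasHomogeneous μ)
    {N : ℕ} [NeZero N] (hN : 1 < N) {b : Fin N → B} (hb0 : ∀ i, b i ≠ ⊥)
    (hb : ∀ i k : Fin N, i ≠ k → Disjoint (b i) (b k)) (hbsup : Finset.univ.sup b = ⊤)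
    (hbeq : ∀ i k : Fin N, μ (b i) = μ (b k)) :
    ∃ G : B ≃o B, PreservesMeas μ G ∧ ∀ i, G (b i) = b (i + 1) := by
  have hsucc : ∀ i : Fin N, i + 1 ≠ i := by simp [add_eq_left, Fin.one_eq_zero_iff]; omega
  have hproper : ∀ i, IsProperElem (b i) := fun i =>
    ⟨hb0 i, fun htop => hb0 (i + 1) (by simpa [htop] using hb (i + 1) i (hsucc i))⟩
  have hcompl : ∀ i k, μ (b i)ᶜ = μ (b k)ᶜ := by
    intro i k
    simp only [compl_eq_finset_sup_erase hb hbsup,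
      hμ.finset_sup _ fun x _ y _ hxy => hb x y hxy]
    simp [Finset.sum_congr rfl fun x _ => hbeq x 0]
  choose ψ hψm hψ using fun i =>
    hhom (b i) (b (i + 1)) (hproper i) (hproper _) (hbeq _ _) (hcompl _ _)
  refine exists_preservesMeas_forall_apply_eq hμ hb hbsup
    (fun i k hik => hb _ _ (by simpa using hik)) ?_ hψm hψ
  exact (Finset.sup_map Finset.univ (Equiv.addRight (1 : Fin N)).toEmbedding b).symm.trans
    (by rw [Finset.univ_map_equiv_to_embedding, hbsup])

theorem admitsEquiPartition_of_cycle {T : Type*} {μ : B → T} {N : ℕ} [NeZero N] {h : B ≃o B}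
    (hh : PreservesMeas μ h) {c : Fin N → B} (hc : ∀ i k : Fin N, i ≠ k → Disjoint (c i) (c k))
    (hcsup : Finset.univ.sup c = ⊤) (hcyc : ∀ i, h (c i) = c (i + 1)) {j : B} (hj : j ≠ ⊥)
    (hfix : h j = j) : AdmitsEquiPartition μ N j := by
  have ha : ∀ i, h (j ⊓ c i) = j ⊓ c (i + 1) := fun i => by rw [map_inf, hfix, hcyc]
  have hsup : (Finset.univ.sup fun i => j ⊓ c i) = j :=
    finset_sup_inf_eq_self_of_sup_eq_top hcsup j
  obtain ⟨i, -, hi⟩ : ∃ i ∈ Finset.univ, j ⊓ c i ≠ ⊥ := by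
    by_contra! hall
    exact hj (hsup ▸ (Finset.sup_eq_bot_iff _ _).2 hall)
  refine ⟨fun i => j ⊓ c i, Fin.forall_of_imp_add_one (p := fun k => j ⊓ c k ≠ ⊥) ?_ hi,
    fun i k hik => (hc i k hik).mono inf_le_right inf_le_right, hsup, fun k l => ?_⟩
  · intro k hk
    rw [← ha k, Ne, map_eq_bot_iff]
    exact hk
  · have hmeas : ∀ k, μ (j ⊓ c k) = μ (j ⊓ c 0) :=
      Fin.forall_of_imp_add_one (p := fun k => μ (j ⊓ c k) = μ (j ⊓ c 0))
        (fun k hk => by rw [← ha k, hh, hk]) rfl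
    rw [hmeas k, hmeas l]

lemma RokhlinProperty.exists_conj {T : Type*} {μ : B → T} (hR : RokhlinProperty μ) :
    ∃ h : B ≃o B, PreservesMeas μ h ∧ ∀ g : B ≃o B, PreservesMeas μ g → ∀ F : Finset B,
      ∃ u : B ≃o B, PreservesMeas μ u ∧ ∀ x ∈ F, h (u.symm x) = u.symm (g x) := by
  obtain ⟨h, hh, hconj⟩ := hR
  refine ⟨h, hh, fun g hg F => ?_⟩
  obtain ⟨u, hu, hux⟩ := hconj g hg F
  exact ⟨u, hu, fun x hx => by rw [← (hux x hx).1, OrderIso.symm_apply_apply]⟩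

theorem equi_partition_of_proper_general
    (lam : B → S) (hlam : IsBAMeasure lam) (hhom : MeasHomogeneous lam)
    (hR : RokhlinProperty lam) {N : ℕ} (hN : 1 < N)
    (htop : AdmitsEquiPartition lam N ⊤) :
    ∀ j : B, IsProperElem j → AdmitsEquiPartition lam N j := by
  classical
  intro j hj
  have : NeZero N := ⟨by omega⟩
  obtain ⟨b, hb0, hb, hbsup, hbeq⟩ := htop
  obtain ⟨G, hGm, hGb⟩ := exists_preservesMeas_cycle hlam hhom hN hb0 hb hbsup hbeq
  obtain ⟨h, hh, hconj⟩ := hR.exists_conj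
  obtain ⟨u, -, hu⟩ := hconj G hGm (Finset.univ.image b)
  obtain ⟨v, hv, hvj⟩ := hconj (OrderIso.refl B) (fun _ => rfl) {j}
  have hcyc : ∀ i, h (u.symm (b i)) = u.symm (b (i + 1)) := fun i => by
    rw [hu _ (Finset.mem_image_of_mem b (Finset.mem_univ i)), hGb]
  have hpart : AdmitsEquiPartition lam N (v.symm j) :=
    admitsEquiPartition_of_cycle hh (fun i k hik => (hb i k hik).map_orderIso u.symm)
      (by rw [← comp_def, ← map_finset_sup, hbsup, map_top]) hcyc
      (by simpa using hj.1) (hvj j (Finset.mem_singleton_self j))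
  simpa using hpart.map hv

/-- if a homogeneous measure `λ` has the Rokhlin property and
`⊤` admits an equi-measured `N`-partition (`N > 1`), then so does every proper
element of `B`. -/
theorem equi_partition_of_proper [Countable B] [Nontrivial B]
    (hatomless : ∀ a : B, a ≠ ⊥ → ∃ b : B, b ≠ ⊥ ∧ b < a)
    (lam : B → S) (hlam : IsBAMeasure lam) (hhom : MeasHomogeneous lam)
    (hR : RokhlinProperty lam) {N : ℕ} (hN : 1 < N)
    (htop : AdmitsEquiPartition lam N ⊤) :
    ∀ j : B, IsProperElem j → AdmitsEquiPartition lam N j :=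
  equi_partition_of_proper_general lam hlam hhom hR hN htop
end
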